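/- arXiv:1610.01475 — 8 statements merged into one kernel-verified Lean document; each statement's English description precedes it below -/
import Mathlib

section
/- If G is a connected graph on n vertices with diameter d and a resolving set of size k, then n ≤ d^k + k. -/
/-- A set `R` of vertices of a graph `G` is a *resolving set* if every pair of distinct
vertices is distinguished by its distance to some vertex of `R`. -/
def SimpleGraph.IsResolvingSet {V : Type*} (G : SimpleGraph V) (R : Set V) : Prop :=
  ∀ u v : V, u ≠ v → ∃ x ∈ R, G.dist x u ≠ G.dist x v

/-- If `G` is a connected graph on `n` vertices with diameter `d` and a resolving set of
size `k`, then `n ≤ d^k + k`. -/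
theorem statement0 {V : Type*} [Fintype V] (G : SimpleGraph V) (hG : G.Connected)
    (d k : ℕ) (hd : G.diam = d) (R : Finset V) (hR : G.IsResolvingSet ↑R)
    (hk : R.card = k) :
    Fintype.card V ≤ d ^ k + k := by
  subst hd hk
  classical
  have hne : G.ediam ≠ ⊤ := by
    rw [SimpleGraph.ediam_def, ← lt_top_iff_ne_top]
    have h1 : ⨆ p : V × V, G.edist p.1 p.2 = Finset.univ.sup (fun p : V × V => G.edist p.1 p.2) := by
      rw [Finset.sup_univ_eq_iSup]
    rw [h1]
    apply Finset.sup_lt_iff (by simp) |>.mpr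
    intro p _
    rw [lt_top_iff_ne_top, SimpleGraph.edist_ne_top_iff_reachable]
    exact hG p.1 p.2
  -- the fingerprint map
  have key : ∀ (v : V), v ∉ R → ∀ x : V, x ∈ R → G.dist x v - 1 < G.diam := by
    intro v hv x hx
    have h1 : 0 < G.dist x v := hG.pos_dist_of_ne (fun h => hv (h ▸ hx))
    have h2 : G.dist x v ≤ G.diam := SimpleGraph.dist_le_diam hne
    omega
  let g : {v : V // v ∉ R} → (↑R → Fin G.diam) :=
    fun v x => ⟨G.dist x v - 1, key v v.2 x x.2⟩
  have hginj : Function.Injective g := by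
    intro u v huv
    by_contra hne'
    have hne'' : (u : V) ≠ (v : V) := fun h => hne' (Subtype.ext h)
    obtain ⟨x, hx, hdx⟩ := hR u v hne''
    have h1 : 0 < G.dist x u := hG.pos_dist_of_ne (fun h => u.2 (h ▸ hx))
    have h2 : 0 < G.dist x v := hG.pos_dist_of_ne (fun h => v.2 (h ▸ hx))
    have := congrFun huv ⟨x, hx⟩
    simp only [g, Fin.mk.injEq] at this
    omega
  have hcard : Fintype.card {v : V // v ∉ R} ≤ G.diam ^ R.card := by
    calc Fintype.card {v : V // v ∉ R} ≤ Fintype.card (↑R → Fin G.diam) :=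
          Fintype.card_le_of_injective g hginj
      _ = G.diam ^ R.card := by simp [Fintype.card_coe]
  have hsplit : Fintype.card {v : V // v ∉ R} + R.card = Fintype.card V := by
    have : Fintype.card {v : V // v ∉ R} = Rᶜ.card := by
      rw [Finset.card_compl]
      simp [Fintype.card_subtype_compl, Fintype.card_coe]
    rw [this, Finset.card_compl]
    have := R.card_le_univ
    omega
  omega
end

section
/- If H is a twin-free hypergraph on vertex set V with a test cover of size t and dual VC dimension c, then |V| ≤ t^c + 1. -/
variable {V : Type*} [DecidableEq V]

/-- The hypergraph with vertex set `V` and edge set `E` is twin-free if every two distinct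
vertices are separated by some hyperedge. -/
def TwinFree (E : Finset (Finset V)) : Prop :=
  ∀ u v : V, u ≠ v → ∃ e ∈ E, (u ∈ e ∧ v ∉ e) ∨ (v ∈ e ∧ u ∉ e)

/-- A test cover: a set `C` of hyperedges covering every vertex and separating every pair of
distinct vertices. -/
def IsTestCover (E C : Finset (Finset V)) : Prop :=
  C ⊆ E ∧ (∀ v : V, ∃ e ∈ C, v ∈ e) ∧
    ∀ u v : V, u ≠ v → ∃ e ∈ C, (u ∈ e ∧ v ∉ e) ∨ (v ∈ e ∧ u ∉ e)

/-- A finset `A` of hyperedges is shattered in the dual hypergraph if every subfamily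
`B ⊆ A` is exactly the set of members of `A` containing some vertex `x`. -/
def DualShatters (A : Finset (Finset V)) : Prop :=
  ∀ B ⊆ A, ∃ x : V, ∀ e ∈ A, x ∈ e ↔ e ∈ B

/-- `c` is the dual VC dimension of the hypergraph with edge set `E`. -/
def IsDualVCDim (E : Finset (Finset V)) (c : ℕ) : Prop :=
  (∃ A ⊆ E, DualShatters A ∧ A.card = c) ∧ ∀ A ⊆ E, DualShatters A → A.card ≤ c

lemma choose_le_pow_aux (t : ℕ) : ∀ k, Nat.choose t k ≤ t ^ k := by
  intro k
  induction k with
  | zero => simp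
  | succ k ih =>
    have h1 : Nat.choose t (k + 1) * (k + 1) = Nat.choose t k * (t - k) :=
      Nat.choose_succ_right_eq t k
    have h2 : Nat.choose t (k + 1) ≤ Nat.choose t (k + 1) * (k + 1) :=
      Nat.le_mul_of_pos_right _ (Nat.succ_pos k)
    calc Nat.choose t (k + 1) ≤ Nat.choose t k * (t - k) := h1 ▸ h2
      _ ≤ t ^ k * t := Nat.mul_le_mul ih (Nat.sub_le t k)
      _ = t ^ (k + 1) := (pow_succ t k).symm

lemma step_aux (t c : ℕ) (hc : 1 ≤ c) : Nat.choose t (c + 1) + t ^ c ≤ t ^ (c + 1) := by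
  match t with
  | 0 => simp [Nat.choose_eq_zero_of_lt (Nat.succ_pos c), Nat.zero_pow (Nat.pos_of_ne_zero (by omega : c ≠ 0))]
  | 1 =>
    have : Nat.choose 1 (c + 1) = 0 := Nat.choose_eq_zero_of_lt (by omega)
    simp [this]
  | (n + 2) =>
    set s := n + 2 with hs
    have h2C : 2 * Nat.choose s (c + 1) ≤ s ^ (c + 1) := by
      have h1 : Nat.choose s (c + 1) * (c + 1) = Nat.choose s c * (s - c) :=
        Nat.choose_succ_right_eq s c
      calc 2 * Nat.choose s (c + 1) ≤ Nat.choose s (c + 1) * (c + 1) := by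
            rw [mul_comm]; exact Nat.mul_le_mul_left _ (by omega)
        _ = Nat.choose s c * (s - c) := h1
        _ ≤ s ^ c * s := Nat.mul_le_mul (choose_le_pow_aux s c) (Nat.sub_le s c)
        _ = s ^ (c + 1) := (pow_succ s c).symm
    have h2p : 2 * s ^ c ≤ s ^ (c + 1) := by
      rw [pow_succ, mul_comm (s ^ c) s]
      exact Nat.mul_le_mul_right _ (by omega)
    have : 2 * (Nat.choose s (c + 1) + s ^ c) ≤ 2 * s ^ (c + 1) := by
      rw [mul_add]; omega
    omega

lemma sum_choose_le (t c : ℕ) : ∑ i ∈ Finset.range (c + 1), Nat.choose t i ≤ t ^ c + 1 := by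
  induction c with
  | zero => simp
  | succ c ih =>
    rw [Finset.sum_range_succ]
    match c with
    | 0 => simp [Nat.choose_one_right]; omega
    | d + 1 =>
      have := step_aux t (d + 1) (by omega)
      omega

/-- If `H` is a twin-free hypergraph on vertex set `V` with a test cover of size `t` and
dual VC dimension `c`, then `|V| ≤ t^c + 1`. -/
theorem statement1 [Fintype V] (E : Finset (Finset V)) (htf : TwinFree E)
    (C : Finset (Finset V)) (hC : IsTestCover E C) (t c : ℕ) (ht : C.card = t)
    (hc : IsDualVCDim E c) :
    Fintype.card V ≤ t ^ c + 1 := by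
  obtain ⟨hCE, hcov, hsep⟩ := hC
  classical
  -- trace map
  set f : V → Finset (Finset V) := fun v => C.filter (fun e => v ∈ e) with hf
  have hinj : Function.Injective f := by
    intro u v huv
    by_contra hne
    obtain ⟨e, heC, he⟩ := hsep u v hne
    rcases he with ⟨hu, hv⟩ | ⟨hv, hu⟩
    · have h1 : e ∈ f u := Finset.mem_filter.2 ⟨heC, hu⟩
      have h2 : e ∉ f v := fun h => hv (Finset.mem_filter.1 h).2
      rw [huv] at h1; exact h2 h1
    · have h1 : e ∈ f v := Finset.mem_filter.2 ⟨heC, hv⟩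
      have h2 : e ∉ f u := fun h => hu (Finset.mem_filter.1 h).2
      rw [← huv] at h1; exact h2 h1
  set 𝒜 : Finset (Finset (Finset V)) := Finset.univ.image f with hA
  have hcard : Fintype.card V = 𝒜.card := by
    rw [hA, Finset.card_image_of_injective _ hinj, Finset.card_univ]
  -- shatterer is contained in small subsets of C
  have hsub : 𝒜.shatterer ⊆ (Finset.range (c + 1)).biUnion (fun i => Finset.powersetCard i C) := by
    intro S hS
    have hshat : 𝒜.Shatters S := Finset.mem_shatterer.1 hS
    -- S ⊆ C
    have hSC : S ⊆ C := by
      obtain ⟨a, haA, haS⟩ := hshat (Finset.Subset.refl S)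
      have : S ⊆ a := by
        intro e he
        have : e ∈ S ∩ a := by rw [haS]; exact he
        exact (Finset.mem_inter.1 this).2
      obtain ⟨x, _, rfl⟩ := Finset.mem_image.1 haA
      exact this.trans (Finset.filter_subset _ _)
    -- S dual-shatters
    have hdual : DualShatters S := by
      intro B hB
      obtain ⟨a, haA, haS⟩ := hshat hB
      obtain ⟨x, _, rfl⟩ := Finset.mem_image.1 haA
      refine ⟨x, fun e heS => ?_⟩
      constructor
      · intro hxe
        have : e ∈ S ∩ C.filter (fun e => x ∈ e) :=
          Finset.mem_inter.2 ⟨heS, Finset.mem_filter.2 ⟨hSC heS, hxe⟩⟩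
        rw [haS] at this; exact this
      · intro heB
        have : e ∈ S ∩ C.filter (fun e => x ∈ e) := by rw [haS]; exact heB
        exact (Finset.mem_filter.1 (Finset.mem_inter.1 this).2).2
    have hSc : S.card ≤ c := hc.2 S (hSC.trans hCE) hdual
    exact Finset.mem_biUnion.2 ⟨S.card, Finset.mem_range.2 (by omega),
      Finset.mem_powersetCard.2 ⟨hSC, rfl⟩⟩
  calc Fintype.card V = 𝒜.card := hcard
    _ ≤ 𝒜.shatterer.card := Finset.card_le_card_shatterer 𝒜
    _ ≤ ((Finset.range (c + 1)).biUnion (fun i => Finset.powersetCard i C)).card :=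
        Finset.card_le_card hsub
    _ ≤ ∑ i ∈ Finset.range (c + 1), (Finset.powersetCard i C).card :=
        Finset.card_biUnion_le
    _ = ∑ i ∈ Finset.range (c + 1), Nat.choose t i := by
        refine Finset.sum_congr rfl fun i _ => ?_
        rw [Finset.card_powersetCard, ht]
    _ ≤ t ^ c + 1 := sum_choose_le t c
end

section
/- Sauer–Shelah Lemma: if H = (V, E) is a hypergraph with VC dimension c and X ⊆ V, then the number of distinct sets of the form e ∩ X for e ∈ E is at most |X|^c + 1. -/
variable {V : Type*} [DecidableEq V]

/-- A finset `X` is shattered by the edge family `E` if every subset of `X` arises as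
`e ∩ X` for some `e ∈ E`. -/
def Shatters (E : Finset (Finset V)) (X : Finset V) : Prop :=
  ∀ Y ⊆ X, ∃ e ∈ E, e ∩ X = Y

/-- `c` is the VC dimension of the hypergraph with edge set `E`: the maximum size of a
shattered set. -/
def IsVCDim (E : Finset (Finset V)) (c : ℕ) : Prop :=
  (∃ X : Finset V, Shatters E X ∧ X.card = c) ∧ ∀ X : Finset V, Shatters E X → X.card ≤ c

lemma sum_choose_aux (n c : ℕ) : ∑ k ∈ Finset.Icc 1 c, n.choose k ≤ n ^ c := by
  induction c with
  | zero => simp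
  | succ c ih =>
    rcases Nat.eq_zero_or_pos c with rfl | hc
    · simp [Nat.choose_le_pow n 1]
    rw [Finset.sum_Icc_succ_top (by omega)]
    have h1 : n.choose (c + 1) * 2 ≤ n ^ c * n := by
      calc n.choose (c + 1) * 2 ≤ n.choose (c + 1) * (c + 1) := by
            exact Nat.mul_le_mul_left _ (by omega)
        _ = n.choose c * (n - c) := Nat.choose_succ_right_eq n c
        _ ≤ n ^ c * n := Nat.mul_le_mul (Nat.choose_le_pow n c) (Nat.sub_le n c)
    rcases Nat.lt_or_ge n 2 with hn | hn
    · interval_cases n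
      · have hz : ∀ k ∈ Finset.Icc 1 c, Nat.choose 0 k = 0 := fun k hk =>
          Nat.choose_eq_zero_of_lt (by simp at hk; omega)
        rw [Finset.sum_eq_zero hz]
        simp [Nat.choose_eq_zero_of_lt (Nat.succ_pos c), Nat.zero_pow]
      · have h0 : Nat.choose 1 (c + 1) = 0 := Nat.choose_eq_zero_of_lt (by omega)
        simp [h0] at ih ⊢
        omega
    · have h2 : n.choose (c + 1) ≤ n ^ c * (n - 1) := by
        have : n ≤ 2 * (n - 1) := by omega
        nlinarith [Nat.mul_le_mul_left (n ^ c) this]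
      calc ∑ k ∈ Finset.Icc 1 c, n.choose k + n.choose (c + 1)
          ≤ n ^ c + n ^ c * (n - 1) := Nat.add_le_add ih h2
        _ = n ^ c * n := by
            rw [Nat.add_comm, ← Nat.mul_succ, Nat.succ_eq_add_one,
              Nat.sub_add_cancel (by omega : 1 ≤ n)]
        _ = n ^ (c + 1) := by ring

/-- Sauer–Shelah Lemma: if `H = (V, E)` is a hypergraph with VC dimension `c` and `X ⊆ V`,
then the number of distinct sets of the form `e ∩ X` for `e ∈ E` is at most `|X|^c + 1`. -/
theorem statement2 (E : Finset (Finset V)) (c : ℕ) (hc : IsVCDim E c) (X : Finset V) :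
    (E.image (fun e => e ∩ X)).card ≤ X.card ^ c + 1 := by
  set 𝒜 : Finset (Finset V) := E.image (fun e => e ∩ X) with h𝒜
  have key : 𝒜.shatterer ⊆ (Finset.Iic c).biUnion (fun k => X.powersetCard k) := by
    intro s hs
    rw [Finset.mem_shatterer] at hs
    -- s ⊆ X
    obtain ⟨u, hu, hsu⟩ := hs Finset.Subset.rfl
    obtain ⟨e, -, rfl⟩ := Finset.mem_image.1 hu
    have hsX : s ⊆ X := by
      intro x hx
      have := hsu ▸ hx
      exact (Finset.mem_inter.1 ((Finset.inter_subset_right : s ∩ (e ∩ X) ⊆ e ∩ X)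
        (hsu.symm ▸ hx))).2
    -- s is shattered by E in the sense of `Shatters`
    have hsh : Shatters E s := by
      intro Y hY
      obtain ⟨u, hu, hsu'⟩ := hs hY
      obtain ⟨f, hf, rfl⟩ := Finset.mem_image.1 hu
      refine ⟨f, hf, ?_⟩
      rw [← hsu']
      rw [Finset.inter_comm s (f ∩ X), Finset.inter_assoc]
      congr 1
      exact (Finset.inter_eq_right.2 hsX).symm
    have hcard : s.card ≤ c := hc.2 s hsh
    exact Finset.mem_biUnion.2 ⟨s.card, Finset.mem_Iic.2 hcard,
      Finset.mem_powersetCard.2 ⟨hsX, rfl⟩⟩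
  calc 𝒜.card ≤ 𝒜.shatterer.card := Finset.card_le_card_shatterer 𝒜
    _ ≤ ((Finset.Iic c).biUnion (fun k => X.powersetCard k)).card := Finset.card_le_card key
    _ ≤ ∑ k ∈ Finset.Iic c, (X.powersetCard k).card := Finset.card_biUnion_le
    _ = ∑ k ∈ Finset.Iic c, X.card.choose k := by
        simp [Finset.card_powersetCard]
    _ ≤ X.card ^ c + 1 := by
        have : Finset.Iic c = insert 0 (Finset.Icc 1 c) := by
          ext k; simp [Finset.mem_Iic, Finset.mem_Icc]; omega
        rw [this, Finset.sum_insert (by simp)]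
        have h := sum_choose_aux X.card c
        simp only [Nat.choose_zero_right]
        omega
end

section
/- If T is a tree with metric dimension k ≥ 2 and odd diameter d ≥ 3, then T has at most (1/8)(kd - k + 8)(d+1) vertices. -/
namespace MetricDimAux
open SimpleGraph Walk

variable {V : Type*} [DecidableEq V] {G : SimpleGraph V}

/-- `u` lies between `x` and `y` (metrically). -/
def Btw (G : SimpleGraph V) (x u y : V) : Prop :=
  G.dist x u + G.dist u y = G.dist x y

lemma Btw.symm {x u y : V} (h : Btw G x u y) : Btw G y u x := by
  unfold Btw at *
  rw [dist_comm (u := y) (v := u), dist_comm (u := u) (v := x), dist_comm (u := y) (v := x)]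
  omega

lemma btw_left (x y : V) : Btw G x x y := by simp [Btw]

lemma btw_right (x y : V) : Btw G x y y := by simp [Btw]

lemma btw_of_mem_support {x y u : V} (hc : G.Connected) (W : G.Walk x y)
    (hW : W.length = G.dist x y) (hu : u ∈ W.support) :
    G.dist x u = (W.takeUntil u hu).length ∧ G.dist u y = (W.dropUntil u hu).length ∧
      Btw G x u y := by
  have h1 : G.dist x u ≤ (W.takeUntil u hu).length := dist_le _
  have h2 : G.dist u y ≤ (W.dropUntil u hu).length := dist_le _
  have h3 : (W.takeUntil u hu).length + (W.dropUntil u hu).length = W.length := by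
    rw [← Walk.length_append, Walk.take_spec]
  have h4 := hc.dist_triangle (u := x) (v := u) (w := y)
  refine ⟨by omega, by omega, ?_⟩
  unfold Btw; omega

lemma exists_shortest (hc : G.Connected) (x y : V) :
    ∃ W : G.Walk x y, W.length = G.dist x y :=
  (hc x y).exists_walk_length_eq_dist

lemma dist_pred (hc : G.Connected) {u y : V} (h : G.dist u y ≠ 0) :
    ∃ u', G.Adj u u' ∧ G.dist u' y = G.dist u y - 1 := by
  obtain ⟨W, hW⟩ := exists_shortest hc u y
  match W, hW with
  | .nil, hW => exfalso; exact h (by simpa using hW.symm)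
  | .cons (v := u') hadj p, hW =>
      refine ⟨u', hadj, ?_⟩
      have h1 : G.dist u' y ≤ p.length := dist_le _
      have h2 : G.dist u y ≤ 1 + G.dist u' y := by
        have := hc.dist_triangle (u := u) (v := u') (w := y)
        have : G.dist u u' ≤ 1 := by
          have : G.dist u u' ≤ (Walk.cons hadj Walk.nil).length := dist_le _
          simpa using this
        omega
      have h3 : (Walk.cons hadj p).length = p.length + 1 := by simp
      omega

/-- density: points at every intermediate distance exist on segments -/
lemma btw_density (hc : G.Connected) {x y : V} {t : ℕ} (ht : t ≤ G.dist x y) :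
    ∃ u, G.dist x u = t ∧ Btw G x u y := by
  induction t with
  | zero => exact ⟨x, by simp, btw_left x y⟩
  | succ t ih =>
      obtain ⟨u, hxu, hb⟩ := ih (by omega)
      have huy : G.dist u y ≠ 0 := by unfold Btw at hb; omega
      obtain ⟨u', hadj, hd⟩ := dist_pred hc huy
      have h1 : G.dist x u' ≤ G.dist x u + 1 := by
        have := hc.dist_triangle (u := x) (v := u) (w := u')
        have h2 : G.dist u u' ≤ 1 := by
          have : G.dist u u' ≤ (Walk.cons hadj Walk.nil).length := dist_le _
          simpa using this
        omega
      have h3 := hc.dist_triangle (u := x) (v := u') (w := y)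
      have h4 := hc.dist_triangle (u := u') (v := u) (w := y)
      unfold Btw at *
      refine ⟨u', by omega, by omega⟩

lemma walk_length_eq_of_btw (hc : G.Connected) {x u y : V} (h : Btw G x u y)
    {W1 : G.Walk x u} {W2 : G.Walk u y} (h1 : W1.length = G.dist x u)
    (h2 : W2.length = G.dist u y) : (W1.append W2).length = G.dist x y := by
  rw [Walk.length_append]; unfold Btw at h; omega

/-- uniqueness of the point at a given distance on a segment -/
lemma btw_unique (hT : G.IsTree) {x u v y : V} (hu : Btw G x u y) (hv : Btw G x v y)
    (hd : G.dist x u = G.dist x v) : u = v := by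
  have hc := hT.isConnected
  obtain ⟨A1, hA1⟩ := exists_shortest hc x u
  obtain ⟨A2, hA2⟩ := exists_shortest hc u y
  obtain ⟨B1, hB1⟩ := exists_shortest hc x v
  obtain ⟨B2, hB2⟩ := exists_shortest hc v y
  have hA : (A1.append A2).length = G.dist x y := walk_length_eq_of_btw hc hu hA1 hA2
  have hB : (B1.append B2).length = G.dist x y := walk_length_eq_of_btw hc hv hB1 hB2
  have pA : (A1.append A2).IsPath := Walk.isPath_of_length_eq_dist _ hA
  have pB : (B1.append B2).IsPath := Walk.isPath_of_length_eq_dist _ hB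
  have heq : A1.append A2 = B1.append B2 := by
    have := hT.IsAcyclic.path_unique ⟨A1.append A2, pA⟩ ⟨B1.append B2, pB⟩
    exact congrArg Subtype.val this
  have hvmem : v ∈ (A1.append A2).support := by
    rw [heq]
    rw [Walk.mem_support_append_iff]
    left; exact Walk.end_mem_support _
  rw [Walk.mem_support_append_iff] at hvmem
  rcases hvmem with hm | hm
  · obtain ⟨e1, e2, _⟩ := btw_of_mem_support hc A1 hA1 hm
    have l3 : (A1.takeUntil v hm).length + (A1.dropUntil v hm).length = A1.length := by
      rw [← Walk.length_append, Walk.take_spec]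
    have : G.dist v u = 0 := by
      have := hc.dist_triangle (u := x) (v := v) (w := u)
      rw [dist_comm (u := v) (v := u)] at *
      omega
    exact ((hc.dist_eq_zero_iff).mp this).symm
  · obtain ⟨_, _, hb⟩ := btw_of_mem_support hc A2 hA2 hm
    unfold Btw at *
    have : G.dist u v = 0 := by omega
    exact (hc.dist_eq_zero_iff).mp this

lemma length_eq_dist_of_isPath (hT : G.IsTree) {x y : V} (W : G.Walk x y) (h : W.IsPath) :
    W.length = G.dist x y := by
  obtain ⟨W0, hW0⟩ := exists_shortest hT.isConnected x y
  have p0 : W0.IsPath := Walk.isPath_of_length_eq_dist _ hW0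
  have : W = W0 := congrArg Subtype.val (hT.IsAcyclic.path_unique ⟨W, h⟩ ⟨W0, p0⟩)
  rw [this, hW0]

lemma exists_median (hT : G.IsTree) (u v w : V) :
    ∃ μ, Btw G u μ v ∧ Btw G u μ w ∧ Btw G v μ w := by
  classical
  have hc := hT.isConnected
  obtain ⟨P, hP⟩ := exists_shortest hc u v
  obtain ⟨Q, hQ⟩ := exists_shortest hc u w
  have hPp : P.IsPath := Walk.isPath_of_length_eq_dist _ hP
  have hQp : Q.IsPath := Walk.isPath_of_length_eq_dist _ hQ
  set F : Finset V := P.support.toFinset ∩ Q.support.toFinset with hF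
  have hne : F.Nonempty := ⟨u, by simp [hF, Walk.start_mem_support]⟩
  obtain ⟨μ, hμF, hmax⟩ := F.exists_max_image (G.dist u ·) hne
  have hμP : μ ∈ P.support := by simp [hF] at hμF; exact List.mem_toFinset.mp (by simp [hμF.1])
  have hμQ : μ ∈ Q.support := by simp [hF] at hμF; exact List.mem_toFinset.mp (by simp [hμF.2])
  obtain ⟨hP1, hP2, hbv⟩ := btw_of_mem_support hc P hP hμP
  obtain ⟨hQ1, hQ2, hbw⟩ := btw_of_mem_support hc Q hQ hμQ
  refine ⟨μ, hbv, hbw, ?_⟩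
  -- third betweenness via concatenated path
  set Dv := P.dropUntil μ hμP with hDv
  set Dw := Q.dropUntil μ hμQ with hDw
  have hDvs : Dv.length = G.dist μ v := hP2.symm
  have hDws : Dw.length = G.dist μ w := hQ2.symm
  have key : ∀ z, z ∈ Dv.support → z ∈ Dw.support → z = μ := by
    intro z hzv hzw
    have hzP : z ∈ P.support := Walk.support_dropUntil_subset _ _ hzv
    have hzQ : z ∈ Q.support := Walk.support_dropUntil_subset _ _ hzw
    have hzF : z ∈ F := by simp [hF]; exact ⟨List.mem_toFinset.mpr hzP |> List.mem_toFinset.mp,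
      List.mem_toFinset.mpr hzQ |> List.mem_toFinset.mp⟩
    have hz1 := hmax z hzF
    obtain ⟨e1, e2, _⟩ := btw_of_mem_support hc Dv hDvs hzv
    obtain ⟨f1, f2, hbzv⟩ := btw_of_mem_support hc P hP hzP
    -- dist u z = dist u μ + dist μ z
    have : G.dist u z = G.dist u μ + G.dist μ z := by
      unfold Btw at hbzv hbv
      have l3 : (Dv.takeUntil z hzv).length + (Dv.dropUntil z hzv).length = Dv.length := by
        rw [← Walk.length_append, Walk.take_spec]
      omega
    have : G.dist μ z = 0 := by omega
    exact (hc.dist_eq_zero_iff).mp (by rwa [dist_comm] at this)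
  have hWvw : (Dv.reverse.append Dw).IsPath := by
    rw [Walk.isPath_def, Walk.support_append]
    apply List.Nodup.append
    · exact (hPp.dropUntil hμP).reverse.support_nodup
    · exact ((hQp.dropUntil hμQ).support_nodup).tail
    · intro z hz1 hz2
      have hz2' : z ∈ Dw.support := List.mem_of_mem_tail hz2
      have hz1' : z ∈ Dv.support := by rwa [Walk.support_reverse, List.mem_reverse] at hz1
      have := key z hz1' hz2'
      subst this
      have : Dw.support = z :: Dw.support.tail := by
        rw [← Walk.support_eq_cons]
      have hnd := (hQp.dropUntil hμQ).support_nodup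
      rw [this] at hnd
      exact (List.nodup_cons.mp hnd).1 hz2
  have hlen := length_eq_dist_of_isPath hT _ hWvw
  rw [Walk.length_append, Walk.length_reverse] at hlen
  unfold Btw
  rw [SimpleGraph.dist_comm (u := v) (v := μ)]
  omega

lemma btw_comp1 (hc : G.Connected) {x u v y : V} (h1 : Btw G x u v) (h2 : Btw G x v y) :
    Btw G x u y := by
  have t1 := hc.dist_triangle (u := u) (v := v) (w := y)
  have t2 := hc.dist_triangle (u := x) (v := u) (w := y)
  unfold Btw at *; omega

lemma btw_comp2 (hc : G.Connected) {x u v y : V} (h1 : Btw G x u v) (h2 : Btw G x v y) :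
    Btw G u v y := by
  have t1 := hc.dist_triangle (u := u) (v := v) (w := y)
  have t2 := hc.dist_triangle (u := x) (v := u) (w := y)
  unfold Btw at *; omega

/-- two points on a segment are comparable -/
lemma btw_TPS (hT : G.IsTree) {x u v y : V} (hu : Btw G x u y) (hv : Btw G x v y)
    (hle : G.dist x u ≤ G.dist x v) : Btw G x u v ∧ Btw G u v y := by
  have hc := hT.isConnected
  obtain ⟨p, hp1, hp2⟩ := btw_density hc (x := x) (y := v) (t := G.dist x u) hle
  have hpy : Btw G x p y := btw_comp1 hc hp2 hv
  have : p = u := btw_unique hT hpy hu (by omega)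
  subst this
  exact ⟨hp2, btw_comp2 hc hp2 hv⟩

/-- gluing two segments sharing a nondegenerate middle -/
lemma btw_compose (hT : G.IsTree) {x y z w : V} (h1 : Btw G x y z) (h2 : Btw G y z w)
    (hyz : y ≠ z) : Btw G x y w ∧ Btw G x z w := by
  have hc := hT.isConnected
  obtain ⟨μ, hμ1, hμ2, hμ3⟩ := exists_median hT x z w
  -- μ, y ∈ I(x,z)
  rcases le_or_gt (G.dist x μ) (G.dist x y) with hcase | hcase
  · exfalso
    obtain ⟨hA, hB⟩ := btw_TPS hT hμ1 h1 hcase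
    -- hB : Btw μ y z ; hμ3 : Btw z μ w
    have hwyz : Btw G w y z := by
      have t1 := hc.dist_triangle (u := w) (v := y) (w := z)
      have t2 := hc.dist_triangle (u := w) (v := μ) (w := y)
      have c1 := SimpleGraph.dist_comm (G := G) (u := w) (v := μ)
      have c2 := SimpleGraph.dist_comm (G := G) (u := w) (v := z)
      have c3 := SimpleGraph.dist_comm (G := G) (u := w) (v := y)
      have c4 := SimpleGraph.dist_comm (G := G) (u := μ) (v := y)
      have c5 := SimpleGraph.dist_comm (G := G) (u := μ) (v := z)
      have c6 := SimpleGraph.dist_comm (G := G) (u := y) (v := z)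
      unfold Btw at *
      omega
    have hpos : 0 < G.dist y z := hc.pos_dist_of_ne hyz
    have c1 := SimpleGraph.dist_comm (G := G) (u := w) (v := y)
    have c2 := SimpleGraph.dist_comm (G := G) (u := w) (v := z)
    unfold Btw at h2 hwyz
    omega
  · obtain ⟨hA, hB⟩ := btw_TPS hT h1 hμ1 (le_of_lt hcase)
    -- hA : Btw x y μ, hB : Btw y μ z
    have hxyw : Btw G x y w ∧ G.dist y w = G.dist y μ + G.dist μ w := by
      have t1 := hc.dist_triangle (u := x) (v := y) (w := w)
      have t2 := hc.dist_triangle (u := y) (v := μ) (w := w)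
      unfold Btw at *
      constructor <;> omega
    refine ⟨hxyw.1, ?_⟩
    -- μ, z on I(y,w): Btw y μ w from hxyw.2, Btw y z w = h2, and dist y μ ≤ dist y z from hB
    have hμw : Btw G y μ w := hxyw.2.symm
    have hμz' : G.dist y μ ≤ G.dist y z := by unfold Btw at hB; omega
    obtain ⟨_, hC⟩ := btw_TPS hT hμw h2 hμz'
    -- hC : Btw μ z w
    have t1 := hc.dist_triangle (u := x) (v := z) (w := w)
    have t2 := hc.dist_triangle (u := x) (v := μ) (w := z)
    unfold Btw at *
    omega

/-- from a strictly interior point one can extend away from any viewpoint `c` -/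
lemma btw_extend (hT : G.IsTree) {c t u w : V} (h : Btw G u t w) (htu : t ≠ u) (htw : t ≠ w) :
    (Btw G c t u ∧ G.dist c t < G.dist c u) ∨ (Btw G c t w ∧ G.dist c t < G.dist c w) := by
  have hc := hT.isConnected
  obtain ⟨μ, hμ1, hμ2, hμ3⟩ := exists_median hT c u w
  -- t, μ ∈ I(u,w)
  rcases le_or_gt (G.dist u t) (G.dist u μ) with hcase | hcase
  · left
    obtain ⟨hA, hB⟩ := btw_TPS hT h hμ3 hcase
    have hpos := hc.pos_dist_of_ne htu
    have t1 := hc.dist_triangle (u := c) (v := μ) (w := t)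
    have t2 := hc.dist_triangle (u := c) (v := t) (w := u)
    have c1 := SimpleGraph.dist_comm (G := G) (u := μ) (v := u)
    have c2 := SimpleGraph.dist_comm (G := G) (u := t) (v := u)
    have c3 := SimpleGraph.dist_comm (G := G) (u := μ) (v := t)
    unfold Btw at *
    constructor <;> omega
  · right
    obtain ⟨hA, hB⟩ := btw_TPS hT hμ3 h (le_of_lt hcase)
    -- hA : Btw u μ t, hB : Btw μ t w
    have hpos := hc.pos_dist_of_ne htw
    have t1 := hc.dist_triangle (u := c) (v := μ) (w := t)
    have t2 := hc.dist_triangle (u := c) (v := t) (w := w)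
    have c1 := SimpleGraph.dist_comm (G := G) (u := μ) (v := w)
    have c2 := SimpleGraph.dist_comm (G := G) (u := t) (v := w)
    have c3 := SimpleGraph.dist_comm (G := G) (u := μ) (v := t)
    unfold Btw at *
    constructor <;> omega

lemma btw_conv1 (hT : G.IsTree) {x y p q μ : V} (hp : Btw G x p y) (hμ : Btw G p μ q) :
    Btw G x μ q ∨ Btw G y μ q := by
  have hc := hT.isConnected
  obtain ⟨z, hz1, hz2, hz3⟩ := exists_median hT x y q
  -- hz1 : Btw x z y, hz2 : Btw x z q, hz3 : Btw y z q
  rcases le_or_gt (G.dist x p) (G.dist x z) with hcase | hcase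
  · left
    obtain ⟨hA, _⟩ := btw_TPS hT hp hz1 hcase
    -- hA : Btw x p z; then Btw x p q, then Btw x μ q
    have t1 := hc.dist_triangle (u := p) (v := z) (w := q)
    have t2 := hc.dist_triangle (u := x) (v := p) (w := q)
    have t3 := hc.dist_triangle (u := x) (v := μ) (w := q)
    have t4 := hc.dist_triangle (u := p) (v := μ) (w := q)
    have t5 := hc.dist_triangle (u := x) (v := p) (w := μ)
    unfold Btw at *
    omega
  · right
    obtain ⟨_, hB⟩ := btw_TPS hT hz1 hp (le_of_lt hcase)
    -- hB : Btw z p y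
    have t1 := hc.dist_triangle (u := p) (v := z) (w := q)
    have t2 := hc.dist_triangle (u := y) (v := p) (w := q)
    have t3 := hc.dist_triangle (u := y) (v := μ) (w := q)
    have t4 := hc.dist_triangle (u := p) (v := μ) (w := q)
    have c1 := SimpleGraph.dist_comm (G := G) (u := z) (v := p)
    have c2 := SimpleGraph.dist_comm (G := G) (u := y) (v := p)
    have c3 := SimpleGraph.dist_comm (G := G) (u := y) (v := z)
    have t5 := hc.dist_triangle (u := y) (v := p) (w := μ)
    unfold Btw at *
    omega

/-- gate (projection) property onto a convex set -/
lemma gate_property (hT : G.IsTree) {S : Finset V}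
    (hconv : ∀ p ∈ S, ∀ q ∈ S, ∀ μ, Btw G p μ q → μ ∈ S)
    {v p : V} (hpS : p ∈ S) (hmin : ∀ s ∈ S, G.dist v p ≤ G.dist v s) :
    ∀ s ∈ S, G.dist v s = G.dist v p + G.dist p s := by
  intro s hs
  have hc := hT.isConnected
  obtain ⟨μ, hμ1, hμ2, hμ3⟩ := exists_median hT v p s
  have hμS : μ ∈ S := hconv p hpS s hs μ hμ3
  have hminμ := hmin μ hμS
  have : μ = p := by
    have := hc.dist_eq_zero_iff (u := μ) (v := p)
    unfold Btw at hμ1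
    have : G.dist μ p = 0 := by omega
    exact (hc.dist_eq_zero_iff).mp this
  subst this
  unfold Btw at hμ2
  omega

/-- distance between members of different fibers -/
lemma cross_fiber (hT : G.IsTree) {S : Finset V}
    (hconv : ∀ p ∈ S, ∀ q ∈ S, ∀ μ, Btw G p μ q → μ ∈ S)
    {u v p q : V} (hpS : p ∈ S) (hqS : q ∈ S) (hpq : p ≠ q)
    (hugate : ∀ s ∈ S, G.dist u s = G.dist u p + G.dist p s)
    (humin : ∀ s ∈ S, G.dist u p ≤ G.dist u s)
    (hvgate : ∀ s ∈ S, G.dist v s = G.dist v q + G.dist q s) :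
    G.dist u v = G.dist u p + G.dist p q + G.dist q v := by
  have hc := hT.isConnected
  obtain ⟨μ, hμ1, hμ2, hμ3⟩ := exists_median hT u v p
  -- hμ1 : Btw u μ v, hμ2 : Btw u μ p, hμ3 : Btw v μ p
  have hpqv : Btw G p q v := by
    have := hvgate p hpS
    have c1 := SimpleGraph.dist_comm (G := G) (u := v) (v := q)
    have c2 := SimpleGraph.dist_comm (G := G) (u := v) (v := p)
    have c3 := SimpleGraph.dist_comm (G := G) (u := q) (v := p)
    unfold Btw; omega
  have hμpv : Btw G p μ v := hμ3.symm
  rcases le_or_gt (G.dist p μ) (G.dist p q) with hcase | hcase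
  · obtain ⟨hA, _⟩ := btw_TPS hT hμpv hpqv hcase
    -- hA : Btw p μ q  → μ ∈ S
    have hμS : μ ∈ S := hconv p hpS q hqS μ hA
    have hminμ := humin μ hμS
    have hμp : μ = p := by
      unfold Btw at hμ2
      have c1 := SimpleGraph.dist_comm (G := G) (u := μ) (v := p)
      have : G.dist μ p = 0 := by omega
      exact (hc.dist_eq_zero_iff).mp this
    subst hμp
    -- Btw u μ v with μ = p : d(u,v) = d(u,p) + d(p,v), and d(p,v) = d(p,q)+d(q,v)
    unfold Btw at hμ1 hpqv
    omega
  · exfalso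
    obtain ⟨hA, hB⟩ := btw_TPS hT hpqv hμpv (le_of_lt hcase)
    -- hA : Btw p q μ, hB : Btw q μ v
    have h1 := hugate q hqS
    have t1 := hc.dist_triangle (u := u) (v := μ) (w := q)
    have c1 := SimpleGraph.dist_comm (G := G) (u := μ) (v := p)
    have c2 := SimpleGraph.dist_comm (G := G) (u := q) (v := μ)
    have hne : G.dist p q ≠ 0 := fun h0 => hpq ((hc.dist_eq_zero_iff).mp h0)
    unfold Btw at *
    omega

/-- extreme point of a set: not strictly between two members -/
def IsExtreme (G : SimpleGraph V) (S : Finset V) (p : V) : Prop :=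
  ∀ u ∈ S, ∀ w ∈ S, Btw G u p w → p = u ∨ p = w

open scoped Classical in
lemma ball_count (hT : G.IsTree) (S : Finset V) (E : V → ℕ) (m : ℕ)
    (S₀ : Finset V) (hS₀S : S₀ ⊆ S) {c : V} (hcS₀ : c ∈ S₀)
    (hclosed : ∀ p ∈ S₀, p ≠ c → ∀ t ∈ S, Btw G c p t → t ∈ S₀)
    (hdepth : ∀ p ∈ S₀, p ≠ c → E p + G.dist c p ≤ m) :
    ∑ p ∈ S₀, (1 + E p) ≤
      (1 + E c) + (S₀.filter (IsExtreme G S)).card * (∑ δ ∈ Finset.Icc 1 m, (m + 1 - δ)) := by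
  classical
  have hc := hT.isConnected
  rw [← Finset.add_sum_erase _ _ hcS₀]
  have H' : ∀ p : V, ∃ t, p ∈ S₀.erase c →
      t ∈ S₀.filter (IsExtreme G S) ∧ Btw G c p t := by
    intro p
    by_cases hp : p ∈ S₀.erase c
    · have hpS₀ : p ∈ S₀ := Finset.mem_of_mem_erase hp
      have hpS : p ∈ S := hS₀S hpS₀
      have hpc : p ≠ c := Finset.ne_of_mem_erase hp
      set Tp := S.filter (fun s => Btw G c p s) with hTp
      have hpTp : p ∈ Tp := by
        rw [hTp, Finset.mem_filter]; exact ⟨hpS, btw_right c p⟩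
      obtain ⟨t, htT, hmax⟩ := Tp.exists_max_image (G.dist c ·) ⟨p, hpTp⟩
      rw [hTp, Finset.mem_filter] at htT
      obtain ⟨htS, htb⟩ := htT
      refine ⟨t, fun _ => ⟨?_, htb⟩⟩
      rw [Finset.mem_filter]
      refine ⟨hclosed p hpS₀ hpc t htS htb, ?_⟩
      intro u hu w hw hbtw
      by_contra hne
      push_neg at hne
      rcases btw_extend hT hbtw hne.1 hne.2 with ⟨hb2, hlt⟩ | ⟨hb2, hlt⟩
      · have : Btw G c p u := btw_comp1 hc htb hb2
        have : u ∈ Tp := by rw [hTp, Finset.mem_filter]; exact ⟨hu, this⟩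
        have := hmax u this
        omega
      · have : Btw G c p w := btw_comp1 hc htb hb2
        have : w ∈ Tp := by rw [hTp, Finset.mem_filter]; exact ⟨hw, this⟩
        have := hmax w this
        omega
    · exact ⟨c, fun h => absurd h hp⟩
  choose f hf using H'
  set gm : V → V × ℕ := fun p => (f p, G.dist c p) with hgm
  have hinj : Set.InjOn gm (S₀.erase c) := by
    intro p hp p' hp' heq
    simp only [hgm, Prod.mk.injEq] at heq
    obtain ⟨h1, hb1⟩ := hf p (Finset.mem_coe.mp hp)
    obtain ⟨h1', hb1'⟩ := hf p' (Finset.mem_coe.mp hp')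
    rw [heq.1] at hb1
    exact btw_unique hT hb1 hb1' heq.2
  have step1 : ∑ p ∈ S₀.erase c, (1 + E p) ≤ ∑ p ∈ S₀.erase c, (m + 1 - G.dist c p) := by
    apply Finset.sum_le_sum
    intro p hp
    have := hdepth p (Finset.mem_of_mem_erase hp) (Finset.ne_of_mem_erase hp)
    omega
  have step2 : ∑ p ∈ S₀.erase c, (m + 1 - G.dist c p) =
      ∑ y ∈ (S₀.erase c).image gm, (m + 1 - y.2) := by
    rw [Finset.sum_image (fun x hx y hy h => hinj hx hy h)]
  have hsub : (S₀.erase c).image gm ⊆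
      (S₀.filter (IsExtreme G S)) ×ˢ (Finset.Icc 1 m) := by
    intro y hy
    rw [Finset.mem_image] at hy
    obtain ⟨p, hp, rfl⟩ := hy
    obtain ⟨h1, _⟩ := hf p hp
    rw [Finset.mem_product]
    refine ⟨h1, ?_⟩
    rw [Finset.mem_Icc]
    have hd := hdepth p (Finset.mem_of_mem_erase hp) (Finset.ne_of_mem_erase hp)
    have hne : G.dist c p ≠ 0 := by
      intro h0
      exact (Finset.ne_of_mem_erase hp) ((hc.dist_eq_zero_iff.mp (by rwa [SimpleGraph.dist_comm] at h0)))
    simp only [hgm]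
    omega
  have step3 : ∑ y ∈ (S₀.erase c).image gm, (m + 1 - y.2) ≤
      ∑ y ∈ (S₀.filter (IsExtreme G S)) ×ˢ (Finset.Icc 1 m), (m + 1 - y.2) :=
    Finset.sum_le_sum_of_subset hsub
  have step4 : ∑ y ∈ (S₀.filter (IsExtreme G S)) ×ˢ (Finset.Icc 1 m), (m + 1 - y.2) =
      (S₀.filter (IsExtreme G S)).card * (∑ δ ∈ Finset.Icc 1 m, (m + 1 - δ)) := by
    rw [Finset.sum_product]
    simp only []
    rw [Finset.sum_const, smul_eq_mul]
  omega

lemma two_sigma (m : ℕ) : 2 * (∑ δ ∈ Finset.Icc 1 m, (m + 1 - δ)) = m * (m + 1) := by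
  induction m with
  | zero => simp
  | succ n ih =>
      have hins : Finset.Icc 1 (n+1) = insert (n+1) (Finset.Icc 1 n) := by
        ext x; simp [Finset.mem_Icc]; omega
      rw [hins, Finset.sum_insert (by simp [Finset.mem_Icc])]
      have heq : ∑ δ ∈ Finset.Icc 1 n, (n + 1 + 1 - δ) =
          ∑ δ ∈ Finset.Icc 1 n, ((n + 1 - δ) + 1) := by
        apply Finset.sum_congr rfl
        intro δ hδ
        rw [Finset.mem_Icc] at hδ
        omega
      rw [heq, Finset.sum_add_distrib, Finset.sum_const]
      simp only [Nat.card_Icc, smul_eq_mul, mul_one]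
      have : n + 1 - 1 = n := by omega
      rw [this]
      have goal : 2 * (n + 1 + 1 - (n+1) + (∑ δ ∈ Finset.Icc 1 n, (n + 1 - δ) + n)) =
          2 * (∑ δ ∈ Finset.Icc 1 n, (n + 1 - δ)) + 2 * n + 2 := by omega
      rw [goal, ih]
      ring

open scoped Classical in
lemma part2 (hT : G.IsTree) (S : Finset V) (E : V → ℕ) (m k : ℕ) (hm : 1 ≤ m)
    (hS2 : ∃ a ∈ S, ∃ b ∈ S, a ≠ b)
    (hconv : ∀ p ∈ S, ∀ q ∈ S, ∀ μ, Btw G p μ q → μ ∈ S)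
    (hP1 : ∀ p ∈ S, ∀ q ∈ S, p ≠ q → E p + G.dist p q + E q ≤ 2 * m + 1)
    (hExtk : (S.filter (IsExtreme G S)).card ≤ k) :
    2 * ∑ p ∈ S, (1 + E p) ≤ (k * m + 4) * (m + 1) := by
  have hc := hT.isConnected
  have hσ : 2 * (∑ δ ∈ Finset.Icc 1 m, (m + 1 - δ)) = m * (m + 1) := two_sigma m
  -- maximal pair
  set PS : Finset (V × V) := (S ×ˢ S).filter (fun y => y.1 ≠ y.2) with hPS
  have hPSne : PS.Nonempty := by
    obtain ⟨a, ha, b, hb, hab⟩ := hS2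
    exact ⟨(a, b), by simp [hPS, Finset.mem_product, ha, hb, hab]⟩
  obtain ⟨⟨a, b⟩, habPS, hmax⟩ :=
    PS.exists_max_image (fun y => E y.1 + G.dist y.1 y.2 + E y.2) hPSne
  simp only [hPS, Finset.mem_filter, Finset.mem_product] at hmax habPS
  obtain ⟨⟨haS, hbS⟩, hab⟩ := habPS
  have hDle : E a + G.dist a b + E b ≤ 2 * m + 1 := hP1 a haS b hbS hab
  have hdab : 1 ≤ G.dist a b := by
    have := hc.pos_dist_of_ne hab; omega
  have hφ : ∀ p ∈ S, ∀ q ∈ S, p ≠ q →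
      E p + G.dist p q + E q ≤ E a + G.dist a b + E b := by
    intro p hp q hq hpq
    exact hmax (p, q) ⟨⟨hp, hq⟩, hpq⟩
  -- case I/II : concentrated near one end
  by_cases hcase1 : E a + G.dist a b ≤ m
  · -- ball centered at b
    have hball := ball_count hT S E m S (le_refl S) hbS
      (fun p _ _ t htS _ => htS)
      (fun p hpS hpb => by
        have := hφ p hpS b hbS hpb
        have c1 := SimpleGraph.dist_comm (G := G) (u := b) (v := p)
        omega)
    have hEb : E b ≤ 2 * m := by omega
    calc 2 * ∑ p ∈ S, (1 + E p) ≤ 2 * (1 + E b) + 2 * ((S.filter (IsExtreme G S)).card * (∑ δ ∈ Finset.Icc 1 m, (m + 1 - δ))) := by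
          omega
      _ ≤ 2 * (1 + 2*m) + k * (m * (m+1)) := by
          have h2 : 2 * ((S.filter (IsExtreme G S)).card * (∑ δ ∈ Finset.Icc 1 m, (m + 1 - δ)))
              ≤ k * (m * (m+1)) := by
            rw [show 2 * ((S.filter (IsExtreme G S)).card * (∑ δ ∈ Finset.Icc 1 m, (m + 1 - δ)))
              = (S.filter (IsExtreme G S)).card * (2 * (∑ δ ∈ Finset.Icc 1 m, (m + 1 - δ))) by ring,
              hσ]
            exact Nat.mul_le_mul_right _ hExtk
          omega
      _ ≤ (k * m + 4) * (m + 1) := by nlinarith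
  · by_cases hcase2 : E b + G.dist a b ≤ m
    · -- ball centered at a
      have hball := ball_count hT S E m S (le_refl S) haS
        (fun p _ _ t htS _ => htS)
        (fun p hpS hpa => by
          have := hφ p hpS a haS hpa
          have c1 := SimpleGraph.dist_comm (G := G) (u := a) (v := p)
          have c2 := SimpleGraph.dist_comm (G := G) (u := a) (v := b)
          omega)
      have hEa : E a ≤ 2 * m := by omega
      calc 2 * ∑ p ∈ S, (1 + E p) ≤ 2 * (1 + E a) + 2 * ((S.filter (IsExtreme G S)).card * (∑ δ ∈ Finset.Icc 1 m, (m + 1 - δ))) := by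
            omega
        _ ≤ 2 * (1 + 2*m) + k * (m * (m+1)) := by
            have h2 : 2 * ((S.filter (IsExtreme G S)).card * (∑ δ ∈ Finset.Icc 1 m, (m + 1 - δ)))
                ≤ k * (m * (m+1)) := by
              rw [show 2 * ((S.filter (IsExtreme G S)).card * (∑ δ ∈ Finset.Icc 1 m, (m + 1 - δ)))
                = (S.filter (IsExtreme G S)).card * (2 * (∑ δ ∈ Finset.Icc 1 m, (m + 1 - δ))) by ring,
                hσ]
              exact Nat.mul_le_mul_right _ hExtk
            omega
        _ ≤ (k * m + 4) * (m + 1) := by nlinarith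
    · -- case III
      push_neg at hcase1 hcase2
      have hEam : E a ≤ m := by omega
      have hEbm : E b ≤ m := by omega
      have hcab := SimpleGraph.dist_comm (G := G) (u := a) (v := b)
      obtain ⟨c2, hc2d, hc2b⟩ := btw_density hc (x := a) (y := b) (t := m - E a) (by omega)
      have hc2S : c2 ∈ S := hconv a haS b hbS c2 hc2b
      have hc2bd : G.dist c2 b = G.dist a b - (m - E a) := by
        unfold Btw at hc2b; omega
      by_cases hD2m : E a + G.dist a b + E b ≤ 2 * m
      · -- single ball around c2
        have hdepth : ∀ p ∈ S, p ≠ c2 → E p + G.dist c2 p ≤ m := by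
          intro p hpS hpc2
          have hccp := SimpleGraph.dist_comm (G := G) (u := c2) (v := p)
          by_cases hpa : p = a
          · rw [hpa]
            have hcca := SimpleGraph.dist_comm (G := G) (u := c2) (v := a)
            omega
          by_cases hpb : p = b
          · rw [hpb]
            have hccb := SimpleGraph.dist_comm (G := G) (u := c2) (v := b)
            omega
          obtain ⟨μ, hμ1, hμ2, hμ3⟩ := exists_median hT p a b
          have hφa := hφ p hpS a haS hpa
          have hφb := hφ p hpS b hbS hpb
          have t1 := hc.dist_triangle (u := p) (v := μ) (w := c2)
          have cμa := SimpleGraph.dist_comm (G := G) (u := μ) (v := a)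
          have cμc2 := SimpleGraph.dist_comm (G := G) (u := μ) (v := c2)
          rcases le_or_gt (G.dist a μ) (G.dist a c2) with hcmp | hcmp
          · obtain ⟨hA, hB⟩ := btw_TPS hT hμ3 hc2b hcmp
            unfold Btw at hμ2 hB hA
            omega
          · obtain ⟨hA, hB⟩ := btw_TPS hT hc2b hμ3 (le_of_lt hcmp)
            unfold Btw at hμ1 hA hB
            omega
        have hEc2 : E c2 ≤ m := by
          by_cases hc2a : c2 = a
          · subst hc2a; omega
          · have := hφ c2 hc2S a haS hc2a
            have := SimpleGraph.dist_comm (G := G) (u := c2) (v := a)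
            omega
        have hball := ball_count hT S E m S (le_refl S) hc2S
          (fun p _ _ t htS _ => htS) hdepth
        calc 2 * ∑ p ∈ S, (1 + E p)
            ≤ 2 * (1 + E c2) + 2 * ((S.filter (IsExtreme G S)).card *
              (∑ δ ∈ Finset.Icc 1 m, (m + 1 - δ))) := by omega
          _ ≤ 2 * (1 + m) + k * (m * (m+1)) := by
              have h2 : 2 * ((S.filter (IsExtreme G S)).card * (∑ δ ∈ Finset.Icc 1 m, (m + 1 - δ)))
                  ≤ k * (m * (m+1)) := by
                rw [show 2 * ((S.filter (IsExtreme G S)).card * (∑ δ ∈ Finset.Icc 1 m, (m + 1 - δ)))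
                  = (S.filter (IsExtreme G S)).card * (2 * (∑ δ ∈ Finset.Icc 1 m, (m + 1 - δ))) by
                    ring, hσ]
                exact Nat.mul_le_mul_right _ hExtk
              omega
          _ ≤ (k * m + 4) * (m + 1) := by nlinarith
      · -- split case : D = 2m+1
        have hD : E a + G.dist a b + E b = 2 * m + 1 := by omega
        obtain ⟨c1, hc1d, hc1b⟩ := btw_density hc (x := a) (y := b) (t := m + 1 - E a) (by omega)
        have hc1S : c1 ∈ S := hconv a haS b hbS c1 hc1b
        have hc1bd : G.dist c1 b = G.dist a b - (m + 1 - E a) := by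
          unfold Btw at hc1b; omega
        obtain ⟨h21a, h21b⟩ := btw_TPS hT hc2b hc1b (by omega)
        -- h21a : Btw a c2 c1, h21b : Btw c2 c1 b
        have hd21 : G.dist c2 c1 = 1 := by unfold Btw at h21a; omega
        have hc12ne : c2 ≠ c1 := by
          intro h; rw [h] at hd21; simp [SimpleGraph.dist_self] at hd21
        have hdc2b : G.dist c2 b = m + 1 - E b := by omega
        have hdc1b : G.dist c1 b = m - E b := by omega
        -- partition
        have hS2btw : ∀ p ∈ S, ¬ Btw G p c2 c1 → Btw G p c1 c2 := by
          intro p _ hnb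
          obtain ⟨μ, hμ1, hμ2, hμ3⟩ := exists_median hT p c2 c1
          have : G.dist c2 μ + G.dist μ c1 = 1 := by unfold Btw at hμ3; omega
          rcases Nat.le_one_iff_eq_zero_or_eq_one.mp (le_of_eq this) with h | h
          · omega
          · rcases (by omega : G.dist c2 μ = 0 ∨ G.dist μ c1 = 0) with h0 | h0
            · have : c2 = μ := (hc.dist_eq_zero_iff).mp h0
              subst this
              exact absurd hμ2 hnb
            · have : μ = c1 := (hc.dist_eq_zero_iff).mp h0
              subst this
              exact hμ1
        have hbnS1 : ¬ Btw G b c2 c1 := by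
          intro hbw
          unfold Btw at hbw
          have := SimpleGraph.dist_comm (G := G) (u := b) (v := c2)
          have := SimpleGraph.dist_comm (G := G) (u := b) (v := c1)
          omega
        have hanS1 : Btw G a c2 c1 := h21a
        -- depth bounds
        have hdepth1 : ∀ p ∈ S.filter (fun p => Btw G p c2 c1), p ≠ c2 →
            E p + G.dist c2 p ≤ m := by
          intro p hp hpc2
          rw [Finset.mem_filter] at hp
          obtain ⟨hpS, hpb1⟩ := hp
          have hpb : p ≠ b := fun h => hbnS1 (h ▸ hpb1)
          obtain ⟨hcomp, -⟩ := btw_compose hT hpb1 h21b hc12ne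
          have hφb := hφ p hpS b hbS hpb
          have c1' := SimpleGraph.dist_comm (G := G) (u := c2) (v := p)
          unfold Btw at hcomp
          omega
        have hclosed1 : ∀ p ∈ S.filter (fun p => Btw G p c2 c1), p ≠ c2 →
            ∀ t ∈ S, Btw G c2 p t → t ∈ S.filter (fun p => Btw G p c2 c1) := by
          intro p hp hpc2 t htS hbt
          rw [Finset.mem_filter] at hp
          obtain ⟨hpS, hpb1⟩ := hp
          obtain ⟨hcomp, -⟩ := btw_compose hT (Btw.symm hpb1) hbt (Ne.symm hpc2)
          rw [Finset.mem_filter]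
          exact ⟨htS, Btw.symm hcomp⟩
        have hdepth2 : ∀ p ∈ S.filter (fun p => ¬ Btw G p c2 c1), p ≠ c1 →
            E p + G.dist c1 p ≤ m := by
          intro p hp hpc1
          rw [Finset.mem_filter] at hp
          obtain ⟨hpS, hpb1⟩ := hp
          have hpbtw : Btw G p c1 c2 := hS2btw p hpS hpb1
          have hpa : p ≠ a := fun h => hpb1 (h ▸ hanS1)
          obtain ⟨hcomp, -⟩ := btw_compose hT hpbtw (Btw.symm h21a) (Ne.symm hc12ne)
          have hφa := hφ p hpS a haS hpa
          have c1' := SimpleGraph.dist_comm (G := G) (u := c1) (v := p)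
          have c2' := SimpleGraph.dist_comm (G := G) (u := c1) (v := a)
          unfold Btw at hcomp
          omega
        have hclosed2 : ∀ p ∈ S.filter (fun p => ¬ Btw G p c2 c1), p ≠ c1 →
            ∀ t ∈ S, Btw G c1 p t → t ∈ S.filter (fun p => ¬ Btw G p c2 c1) := by
          intro p hp hpc1 t htS hbt
          rw [Finset.mem_filter] at hp
          obtain ⟨hpS, hpb1⟩ := hp
          have hpbtw : Btw G p c1 c2 := hS2btw p hpS hpb1
          obtain ⟨hcomp, -⟩ := btw_compose hT (Btw.symm hpbtw) hbt (Ne.symm hpc1)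
          rw [Finset.mem_filter]
          refine ⟨htS, ?_⟩
          intro hcon
          unfold Btw at hcomp hcon
          have d1 := SimpleGraph.dist_comm (G := G) (u := t) (v := c1)
          have d2 := SimpleGraph.dist_comm (G := G) (u := t) (v := c2)
          have d3 := SimpleGraph.dist_comm (G := G) (u := c2) (v := c1)
          omega
        have hc2neb : c2 ≠ b := by
          intro h
          rw [h] at hdc2b
          simp [SimpleGraph.dist_self] at hdc2b
          omega
        have hc1nea : c1 ≠ a := by
          intro h
          rw [h] at hc1d
          have : G.dist a a = 0 := by simp [SimpleGraph.dist_self]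
          omega
        have hEc2 : E c2 ≤ m := by
          have := hφ c2 hc2S b hbS hc2neb
          omega
        have hEc1 : E c1 ≤ m := by
          have := hφ c1 hc1S a haS (Ne.symm (fun h => hc1nea h.symm))
          have := SimpleGraph.dist_comm (G := G) (u := c1) (v := a)
          omega
        have hmem1 : c2 ∈ S.filter (fun p => Btw G p c2 c1) := by
          rw [Finset.mem_filter]; exact ⟨hc2S, btw_left c2 c1⟩
        have hmem2 : c1 ∈ S.filter (fun p => ¬ Btw G p c2 c1) := by
          rw [Finset.mem_filter]
          refine ⟨hc1S, ?_⟩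
          intro hcon
          unfold Btw at hcon
          have := SimpleGraph.dist_comm (G := G) (u := c1) (v := c2)
          have : G.dist c1 c1 = 0 := by simp [SimpleGraph.dist_self]
          omega
        have hb1 := ball_count hT S E m (S.filter (fun p => Btw G p c2 c1))
          (Finset.filter_subset _ _) hmem1 hclosed1 hdepth1
        have hb2 := ball_count hT S E m (S.filter (fun p => ¬ Btw G p c2 c1))
          (Finset.filter_subset _ _) hmem2 hclosed2 hdepth2
        have hsplit := Finset.sum_filter_add_sum_filter_not S (fun p => Btw G p c2 c1)
          (fun p => 1 + E p)
        have hcards : ((S.filter (fun p => Btw G p c2 c1)).filter (IsExtreme G S)).card +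
            ((S.filter (fun p => ¬ Btw G p c2 c1)).filter (IsExtreme G S)).card ≤ k := by
          have e1 : (S.filter (fun p => Btw G p c2 c1)).filter (IsExtreme G S) =
              (S.filter (IsExtreme G S)).filter (fun p => Btw G p c2 c1) :=
            Finset.filter_comm _ _ _
          have e2 : (S.filter (fun p => ¬ Btw G p c2 c1)).filter (IsExtreme G S) =
              (S.filter (IsExtreme G S)).filter (fun p => ¬ Btw G p c2 c1) :=
            Finset.filter_comm _ _ _
          rw [e1, e2]
          rw [Finset.card_filter_add_card_filter_not]
          exact hExtk
        set l1 := ((S.filter (fun p => Btw G p c2 c1)).filter (IsExtreme G S)).card with hl1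
        set l2 := ((S.filter (fun p => ¬ Btw G p c2 c1)).filter (IsExtreme G S)).card with hl2
        have hprod : 2 * (l1 * (∑ δ ∈ Finset.Icc 1 m, (m + 1 - δ))) +
            2 * (l2 * (∑ δ ∈ Finset.Icc 1 m, (m + 1 - δ))) ≤ k * (m * (m + 1)) := by
          have : 2 * (l1 * (∑ δ ∈ Finset.Icc 1 m, (m + 1 - δ))) +
              2 * (l2 * (∑ δ ∈ Finset.Icc 1 m, (m + 1 - δ)))
              = (l1 + l2) * (2 * (∑ δ ∈ Finset.Icc 1 m, (m + 1 - δ))) := by ring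
          rw [this, hσ]
          exact Nat.mul_le_mul_right _ hcards
        have hexpand : (k * m + 4) * (m + 1) = k * (m * (m + 1)) + 4 * (m + 1) := by ring
        omega

end MetricDimAux

open MetricDimAux


/-- The metric dimension of `G` is `k`: there is a resolving set of size `k` and no
smaller one. -/
def SimpleGraph.HasMetricDim {V : Type*} (G : SimpleGraph V) (k : ℕ) : Prop :=
  (∃ R : Finset V, G.IsResolvingSet ↑R ∧ R.card = k) ∧
    ∀ R : Finset V, G.IsResolvingSet ↑R → k ≤ R.card

/-- If `T` is a tree with metric dimension `k ≥ 2` and odd diameter `d ≥ 3`, then `T` has at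
most `(1/8)(kd - k + 8)(d+1)` vertices. -/
theorem statement4 {V : Type*} [Fintype V] (T : SimpleGraph V) (hT : T.IsTree)
    (d k : ℕ) (hd : T.diam = d) (hdodd : Odd d) (hd3 : 3 ≤ d) (hk : 2 ≤ k)
    (hmd : T.HasMetricDim k) :
    8 * Fintype.card V ≤ (k * d - k + 8) * (d + 1) := by
  classical
  obtain ⟨⟨R, hRres, hRcard⟩, -⟩ := hmd
  have hc := hT.isConnected
  obtain ⟨m, hm⟩ := hdodd
  have hm1 : 1 ≤ m := by omega
  have hdle : ∀ u v : V, T.dist u v ≤ 2 * m + 1 := by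
    intro u v
    have h1 : T.ediam ≠ ⊤ := SimpleGraph.ediam_ne_top_of_diam_ne_zero (by rw [hd]; omega)
    have := SimpleGraph.dist_le_diam (G := T) h1 (u := u) (v := v)
    omega
  set S : Finset V := Finset.univ.filter (fun p => ∃ x ∈ R, ∃ y ∈ R, Btw T x p y) with hS
  have hRS : ∀ x ∈ R, x ∈ S := by
    intro x hx
    rw [hS, Finset.mem_filter]
    exact ⟨Finset.mem_univ x, x, hx, x, hx, btw_right x x⟩
  have hconv : ∀ p ∈ S, ∀ q ∈ S, ∀ μ, Btw T p μ q → μ ∈ S := by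
    intro p hp q hq μ hbtw
    rw [hS, Finset.mem_filter] at hp hq ⊢
    obtain ⟨-, x, hx, y, hy, hpxy⟩ := hp
    obtain ⟨-, x', hx', y', hy', hqxy⟩ := hq
    refine ⟨Finset.mem_univ μ, ?_⟩
    rcases btw_conv1 hT hpxy hbtw with h | h
    · rcases btw_conv1 hT hqxy h.symm with h2 | h2
      · exact ⟨x', hx', x, hx, h2⟩
      · exact ⟨y', hy', x, hx, h2⟩
    · rcases btw_conv1 hT hqxy h.symm with h2 | h2
      · exact ⟨x', hx', y, hy, h2⟩
      · exact ⟨y', hy', y, hy, h2⟩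
  have hRne : R.Nonempty := Finset.card_pos.mp (by omega)
  have hSne : S.Nonempty := hRne.imp (fun x hx => hRS x hx)
  have hgate : ∀ v : V, ∃ p, p ∈ S ∧ ∀ s ∈ S, T.dist v p ≤ T.dist v s := by
    intro v
    obtain ⟨p, hp, hmin⟩ := S.exists_min_image (T.dist v ·) hSne
    exact ⟨p, hp, hmin⟩
  choose g hgS hgmin using hgate
  have hgatep : ∀ v : V, ∀ s ∈ S, T.dist v s = T.dist v (g v) + T.dist (g v) s :=
    fun v => gate_property hT hconv (hgS v) (hgmin v)
  have hgid : ∀ p ∈ S, g p = p := by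
    intro p hp
    have h1 := hgmin p p hp
    have h2 : T.dist p p = 0 := by simp [SimpleGraph.dist_self]
    have h3 : T.dist p (g p) = 0 := by omega
    exact ((hc.dist_eq_zero_iff).mp h3).symm
  set E : V → ℕ := fun p => (Finset.univ.filter (fun v => g v = p)).sup (fun v => T.dist v p)
    with hE
  have hfibne : ∀ p ∈ S, p ∈ Finset.univ.filter (fun v => g v = p) := by
    intro p hp
    rw [Finset.mem_filter]
    exact ⟨Finset.mem_univ p, hgid p hp⟩
  have hEub : ∀ v : V, T.dist v (g v) ≤ E (g v) := by
    intro v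
    exact Finset.le_sup (f := fun u => T.dist u (g v))
      (Finset.mem_filter.mpr ⟨Finset.mem_univ v, rfl⟩)
  have hEattain : ∀ p ∈ S, ∃ u, g u = p ∧ T.dist u p = E p := by
    intro p hp
    obtain ⟨u, hu, hequ⟩ := Finset.exists_mem_eq_sup _ ⟨p, hfibne p hp⟩
      (fun v => T.dist v p)
    rw [Finset.mem_filter] at hu
    exact ⟨u, hu.2, hequ.symm⟩
  -- the key pair bound
  have hP1 : ∀ p ∈ S, ∀ q ∈ S, p ≠ q → E p + T.dist p q + E q ≤ 2 * m + 1 := by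
    intro p hp q hq hpq
    obtain ⟨u, hu, huE⟩ := hEattain p hp
    obtain ⟨w, hw, hwE⟩ := hEattain q hq
    have hug : ∀ s ∈ S, T.dist u s = T.dist u p + T.dist p s := by
      intro s hs; have := hgatep u s hs; rwa [hu] at this
    have humin : ∀ s ∈ S, T.dist u p ≤ T.dist u s := by
      intro s hs; have := hgmin u s hs; rwa [hu] at this
    have hwg : ∀ s ∈ S, T.dist w s = T.dist w q + T.dist q s := by
      intro s hs; have := hgatep w s hs; rwa [hw] at this
    have := cross_fiber hT hconv hp hq hpq hug humin hwg
    have hle := hdle u w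
    have c1 := SimpleGraph.dist_comm (G := T) (u := q) (v := w)
    omega
  -- cardinality bound
  have hcard : Fintype.card V ≤ ∑ p ∈ S, (1 + E p) := by
    have h1 : Fintype.card V = ∑ p ∈ S, (Finset.univ.filter (fun v => g v = p)).card := by
      rw [← Finset.card_univ]
      exact Finset.card_eq_sum_card_fiberwise (fun x _ => hgS x)
    rw [h1]
    apply Finset.sum_le_sum
    intro p hp
    have hinj : Set.InjOn (fun v => T.dist v p) (Finset.univ.filter (fun v => g v = p)) := by
      intro u hu v hv heq
      simp only [Finset.coe_filter, Set.mem_setOf_eq] at hu hv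
      by_contra hne
      obtain ⟨x, hxR, hxd⟩ := hRres u v hne
      have hxS := hRS x hxR
      have e1 := hgatep u x hxS
      have e2 := hgatep v x hxS
      rw [hu.2] at e1
      rw [hv.2] at e2
      have c1 := SimpleGraph.dist_comm (G := T) (u := x) (v := u)
      have c2 := SimpleGraph.dist_comm (G := T) (u := x) (v := v)
      simp only at heq
      omega
    have hmapsto : ∀ v ∈ Finset.univ.filter (fun v => g v = p),
        T.dist v p ∈ Finset.range (E p + 1) := by
      intro v hv
      rw [Finset.mem_filter] at hv
      rw [Finset.mem_range]
      have := hEub v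
      rw [hv.2] at this
      omega
    have := Finset.card_le_card_of_injOn (fun v => T.dist v p) hmapsto hinj
    simp only [Finset.card_range] at this
    omega
  -- extreme points are in R
  have hExtk : (S.filter (IsExtreme T S)).card ≤ k := by
    rw [← hRcard]
    apply Finset.card_le_card
    intro p hp
    rw [Finset.mem_filter] at hp
    obtain ⟨hpS, hext⟩ := hp
    have hpS' := hpS
    rw [hS, Finset.mem_filter] at hpS'
    obtain ⟨-, x, hx, y, hy, hpxy⟩ := hpS'
    rcases hext x (hRS x hx) y (hRS y hy) hpxy with h | h
    · rwa [h]
    · rwa [h]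
  have hS2 : ∃ a ∈ S, ∃ b ∈ S, a ≠ b := by
    obtain ⟨a, ha, b, hb, hab⟩ := Finset.one_lt_card.mp (by omega : 1 < R.card)
    exact ⟨a, hRS a ha, b, hRS b hb, hab⟩
  have hmain := part2 hT S E m k hm1 hS2 hconv hP1 hExtk
  have hfinal : 8 * Fintype.card V ≤ 4 * ((k * m + 4) * (m + 1)) := by omega
  have hrhs : (k * d - k + 8) * (d + 1) = 4 * ((k * m + 4) * (m + 1)) := by
    have h1 : k * d - k = 2 * (k * m) := by
      have : k * d = 2 * (k * m) + k := by rw [hm]; ring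
      omega
    rw [h1, hm]
    ring
  omega
end

section
/- Let G be a graph with diameter d and a resolving set S. Let T be a tree decomposition of G of width w and length ℓ, rooted arbitrarily, and let X be a bag such that every bag Y in the subtree below X satisfies Y ∩ S ⊆ X. Then the union A of all bags in the subtree rooted at X satisfies |A| ≤ (d+1)(2ℓ+1)^w. -/
/-!
Let `A` be the union of the bags below `X`. Every edge leaving `A` ends in `X`, so every
walk from a vertex outside `A` into `A` passes through `X`; hence for `s ∉ A` the distance
`dist s u` (`u ∈ A`) is the minimum of `dist s x + dist x u` over `x ∈ X`, and is determined
by the distances from `X` to `u`. Since `S ∩ A ⊆ X` and `S` resolves `G`, the vertices of `A`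
are therefore already distinguished by their distance vectors to `X`. Fixing `x₀ ∈ X`, such a
vector is determined by `dist x₀ u ∈ [0, d]` together with the `|X| - 1 ≤ w` differences
`dist x u - dist x₀ u ∈ [-ℓ, ℓ]`.
-/

/-- A tree decomposition of a graph `G`. -/
structure TreeDecomposition {V : Type*} (G : SimpleGraph V) (ι : Type*) where
  T : SimpleGraph ι
  isTree : T.IsTree
  bag : ι → Set V
  covers_vertices : ∀ v : V, ∃ i, v ∈ bag i
  covers_edges : ∀ ⦃u v : V⦄, G.Adj u v → ∃ i, u ∈ bag i ∧ v ∈ bag i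
  bags_connected : ∀ v : V, (T.induce {i | v ∈ bag i}).Connected

/-- With respect to a root `ρ` of the decomposition tree `T`, the descendants of a node
`i` are the nodes `j` such that every walk from `j` to `ρ` passes through `i`. -/
def Descendants {ι : Type*} (T : SimpleGraph ι) (ρ i : ι) : Set ι :=
  {j | ∀ q : T.Walk j ρ, i ∈ q.support}

namespace SimpleGraph

variable {V : Type*} {G : SimpleGraph V}

lemma Walk.exists_mem_support_of_boundary_subset {A X : Set V}
    (hX : ∀ a b, G.Adj a b → a ∉ A → b ∈ A → b ∈ X) {s u : V} (p : G.Walk s u)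
    (hs : s ∉ A) (hu : u ∈ A) : ∃ x ∈ p.support, x ∈ X := by
  obtain ⟨e, he, hout, hin⟩ := p.exists_boundary_dart Aᶜ hs (by simpa using hu)
  exact ⟨e.snd, p.dart_snd_mem_support_of_mem_darts he,
    hX _ _ e.adj hout (by simpa using hin)⟩

lemma Walk.dist_add_dist_le_length {s u x : V} (p : G.Walk s u) (hx : x ∈ p.support) :
    G.dist s x + G.dist x u ≤ p.length := by
  classical
  rw [← p.take_spec hx, Walk.length_append]
  exact Nat.add_le_add (dist_le _) (dist_le _)

lemma Connected.dist_le_of_forall_walk_meets (hG : G.Connected) {X : Set V} {s u v : V}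
    (hmeet : ∀ p : G.Walk s u, ∃ x ∈ p.support, x ∈ X)
    (h : ∀ x ∈ X, G.dist x u = G.dist x v) : G.dist s v ≤ G.dist s u := by
  obtain ⟨p, hp⟩ := hG.exists_walk_length_eq_dist s u
  obtain ⟨x, hx, hxX⟩ := hmeet p
  calc G.dist s v ≤ G.dist s x + G.dist x v := hG.dist_triangle
    _ = G.dist s x + G.dist x u := by rw [h x hxX]
    _ ≤ G.dist s u := hp ▸ p.dist_add_dist_le_length hx

lemma IsResolvingSet.injOn_dist_of_boundary_subset (hG : G.Connected) {S A X : Set V}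
    (hS : G.IsResolvingSet S) (hSX : S ∩ A ⊆ X)
    (hX : ∀ a b, G.Adj a b → a ∉ A → b ∈ A → b ∈ X) :
    A.InjOn fun u (x : X) ↦ G.dist x u := by
  intro u hu v hv huv
  have h : ∀ x ∈ X, G.dist x u = G.dist x v := fun x hx ↦ congrFun huv ⟨x, hx⟩
  by_contra hne
  obtain ⟨s, hsS, hsd⟩ := hS u v hne
  by_cases hsA : s ∈ A
  · exact hsd (h s (hSX ⟨hsS, hsA⟩))
  · refine hsd (le_antisymm ?_ ?_)
    · exact hG.dist_le_of_forall_walk_meets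
        (fun p ↦ p.exists_mem_support_of_boundary_subset hX hsA hv) (fun x hx ↦ (h x hx).symm)
    · exact hG.dist_le_of_forall_walk_meets
        (fun p ↦ p.exists_mem_support_of_boundary_subset hX hsA hu) h

lemma ncard_le_of_injOn_dist [Finite V] (hG : G.Connected) {A X : Set V} {d ℓ : ℕ}
    (hXℓ : ∀ x ∈ X, ∀ y ∈ X, G.dist x y ≤ ℓ) (hd : ∀ u v, G.dist u v ≤ d)
    (hA : A.InjOn fun u (x : X) ↦ G.dist x u) :
    A.ncard ≤ (d + 1) * (2 * ℓ + 1) ^ (X.ncard - 1) := by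
  rcases X.eq_empty_or_nonempty with rfl | ⟨x₀, hx₀⟩
  · calc A.ncard ≤ 1 := (Set.ncard_le_one).2 fun u hu v hv ↦ hA hu hv (Subsingleton.elim _ _)
      _ ≤ _ := Nat.one_le_iff_ne_zero.2 (by positivity)
  have hdiff : ∀ u, ∀ x ∈ X, G.dist x u ≤ ℓ + G.dist x₀ u ∧ G.dist x₀ u ≤ ℓ + G.dist x u :=
    fun u x hx ↦ ⟨(hG.dist_triangle (v := x₀)).trans (by have := hXℓ x hx x₀ hx₀; omega),
      (hG.dist_triangle (v := x)).trans (by have := hXℓ x₀ hx₀ x hx; omega)⟩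
  let X' : Set V := X \ {x₀}
  -- `dist x u - dist x₀ u + ℓ ∈ [0, 2ℓ]`, written without truncated subtraction
  let code : A → Fin (d + 1) × (X' → Fin (2 * ℓ + 1)) := fun u ↦
    (⟨G.dist x₀ u, Nat.lt_succ_of_le (hd _ _)⟩,
     fun x ↦ ⟨G.dist x u + ℓ - G.dist x₀ u, by have := hdiff u x x.2.1; omega⟩)
  have hcode : Function.Injective code := by
    intro u v huv
    simp only [code, Prod.mk.injEq, Fin.mk.injEq, funext_iff] at huv
    obtain ⟨h₀, hX'⟩ := huv
    refine Subtype.ext (hA u.2 v.2 (funext fun ⟨x, hx⟩ ↦ ?_))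
    show G.dist x u = G.dist x v
    by_cases hxx₀ : x = x₀
    · exact hxx₀ ▸ h₀
    · have hx' : G.dist x u + ℓ - G.dist x₀ u = G.dist x v + ℓ - G.dist x₀ v :=
        hX' ⟨x, hx, hxx₀⟩
      have := hdiff u x hx
      have := hdiff v x hx
      omega
  calc A.ncard = Nat.card A := rfl
    _ ≤ Nat.card (Fin (d + 1) × (X' → Fin (2 * ℓ + 1))) :=
      Nat.card_le_card_of_injective code hcode
    _ = (d + 1) * (2 * ℓ + 1) ^ (X.ncard - 1) := by
      rw [Nat.card_prod, Nat.card_fun, Nat.card_coe_set_eq, Set.ncard_sdiff_singleton_of_mem hx₀]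
      simp

end SimpleGraph

namespace TreeDecomposition

variable {V ι : Type*} {G : SimpleGraph V} (td : TreeDecomposition G ι)

def verticesBelow (ρ i : ι) : Set V := ⋃ j ∈ Descendants td.T ρ i, td.bag j

/-- The walk from `j` to `j'` through the bags containing `v`, followed by a walk from `j'`
to `ρ` avoiding `i`, is a walk from `j` to `ρ`: it must meet `i`, and can only do so in a
bag containing `v`. -/
lemma mem_bag_of_mem_bag_of_mem_descendants {ρ i j j' : ι} {v : V}
    (hj : j ∈ Descendants td.T ρ i) (hj' : j' ∉ Descendants td.T ρ i)
    (hvj : v ∈ td.bag j) (hvj' : v ∈ td.bag j') : v ∈ td.bag i := by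
  obtain ⟨p⟩ := (td.bags_connected v).preconnected ⟨j, hvj⟩ ⟨j', hvj'⟩
  simp only [Descendants, Set.mem_ofPred_eq, not_forall] at hj'
  obtain ⟨q, hq⟩ := hj'
  have hi := hj ((p.map (SimpleGraph.Embedding.induce {k | v ∈ td.bag k}).toHom).append q)
  rcases (SimpleGraph.Walk.mem_support_append_iff _ _).1 hi with hp | hq'
  · obtain ⟨k, -, rfl⟩ := List.mem_map.mp (p.support_map _ ▸ hp)
    exact k.2
  · exact absurd hq' hq

lemma mem_bag_of_adj {ρ i : ι} {a b : V} (hab : G.Adj a b) (ha : a ∉ td.verticesBelow ρ i)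
    (hb : b ∈ td.verticesBelow ρ i) : b ∈ td.bag i := by
  simp only [verticesBelow, Set.mem_iUnion, not_exists] at ha hb
  obtain ⟨j', hj', hbj'⟩ := hb
  obtain ⟨j, haj, hbj⟩ := td.covers_edges hab
  exact td.mem_bag_of_mem_bag_of_mem_descendants hj' (fun hj ↦ ha j hj haj) hbj' hbj

end TreeDecomposition

theorem statement7_general {V ι : Type*} [Fintype V] (G : SimpleGraph V) (hG : G.Connected)
    (d w ℓ : ℕ) (hd : G.diam = d)
    (S : Set V) (hS : G.IsResolvingSet S)
    (td : TreeDecomposition G ι)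
    (hw : ∀ i, (td.bag i).ncard ≤ w + 1)
    (hℓ : ∀ i, ∀ u ∈ td.bag i, ∀ v ∈ td.bag i, G.dist u v ≤ ℓ)
    (ρ i : ι)
    (hSin : ∀ j ∈ Descendants td.T ρ i, td.bag j ∩ S ⊆ td.bag i)
    (A : Set V) (hA : A = ⋃ j ∈ Descendants td.T ρ i, td.bag j) :
    A.ncard ≤ (d + 1) * (2 * ℓ + 1) ^ w := by
  change A = td.verticesBelow ρ i at hA
  subst hA
  have hSA : S ∩ td.verticesBelow ρ i ⊆ td.bag i := by
    rintro s ⟨hsS, hsA⟩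
    simp only [TreeDecomposition.verticesBelow, Set.mem_iUnion] at hsA
    obtain ⟨j, hj, hsj⟩ := hsA
    exact hSin j hj ⟨hsj, hsS⟩
  have hdiam : ∀ u v, G.dist u v ≤ d := fun u v ↦
    hd ▸ G.dist_le_diam (have := hG.nonempty; G.connected_iff_ediam_ne_top.1 hG)
  calc (td.verticesBelow ρ i).ncard ≤ (d + 1) * (2 * ℓ + 1) ^ ((td.bag i).ncard - 1) :=
        SimpleGraph.ncard_le_of_injOn_dist hG (hℓ i) hdiam
          (hS.injOn_dist_of_boundary_subset hG hSA fun _ _ ↦ td.mem_bag_of_adj)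
    _ ≤ (d + 1) * (2 * ℓ + 1) ^ w :=
        Nat.mul_le_mul_left _ (Nat.pow_le_pow_right (by omega) (by have := hw i; omega))

/-- Let `G` be a graph with diameter `d` and a resolving set `S`.  Let `td` be a tree
decomposition of `G` of width `w` and length `ℓ`, rooted at `ρ`, and let `X = bag i` be a
bag such that every bag `Y` in the subtree below `i` satisfies `Y ∩ S ⊆ X`.  Then the
union `A` of all bags in the subtree rooted at `i` satisfies `|A| ≤ (d+1)(2ℓ+1)^w`. -/
theorem statement7 {V ι : Type*} [Fintype V] (G : SimpleGraph V) (hG : G.Connected)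
    (d k w ℓ : ℕ) (hd : G.diam = d)
    (S : Set V) (hS : G.IsResolvingSet S)
    (td : TreeDecomposition G ι)
    (hw : ∀ i, (td.bag i).ncard ≤ w + 1)
    (hℓ : ∀ i, ∀ u ∈ td.bag i, ∀ v ∈ td.bag i, G.dist u v ≤ ℓ)
    (ρ i : ι)
    (hSin : ∀ j ∈ Descendants td.T ρ i, td.bag j ∩ S ⊆ td.bag i)
    (A : Set V) (hA : A = ⋃ j ∈ Descendants td.T ρ i, td.bag j) :
    A.ncard ≤ (d + 1) * (2 * ℓ + 1) ^ w :=
  statement7_general G hG d w ℓ hd S hS td hw hℓ ρ i hSin A hA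
end

section
/- Let G be a graph, and let {(v_1,r_1),…,(v_t,r_t)} be such that for every pair i ≠ j there exists a vertex x_{ij} with d(x_{ij},v_i) ≤ r_i, d(x_{ij},v_j) ≤ r_j, and d(x_{ij},v_m) > r_m for m ∉ {i,j}. For distinct i,j,k,l, any good ij-path and any good kl-path are vertex-disjoint, where a good ij-path is the concatenation of a path of length at most r_i from v_i to x_{ij} and a path of length at most r_j from x_{ij} to v_j. -/
open SimpleGraph

/-- From membership in an append of two walks `v → x → u` with total lengths bounded,
extract walks `w → x` and `v' → w` (with `v'` one of the endpoints) of bounded total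
length. -/
lemma aux_mem_append {V : Type*} {G : SimpleGraph V} {a b c w : V}
    (P : G.Walk a b) (Q : G.Walk b c) {s t : ℕ}
    (hP : P.length ≤ s) (hQ : Q.length ≤ t)
    (hw : w ∈ (P.append Q).support) :
    (∃ (A : G.Walk w b) (B : G.Walk a w), B.length + A.length ≤ s) ∨
    (∃ (A : G.Walk w b) (B : G.Walk c w), B.length + A.length ≤ t) := by
  classical
  rw [SimpleGraph.Walk.mem_support_append_iff] at hw
  rcases hw with hw | hw
  · left
    refine ⟨P.dropUntil w hw, P.takeUntil w hw, ?_⟩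
    have := congr_arg SimpleGraph.Walk.length (P.take_spec hw)
    rw [SimpleGraph.Walk.length_append] at this
    omega
  · right
    refine ⟨(Q.takeUntil w hw).reverse, (Q.dropUntil w hw).reverse, ?_⟩
    have := congr_arg SimpleGraph.Walk.length (Q.take_spec hw)
    rw [SimpleGraph.Walk.length_append] at this
    simp only [SimpleGraph.Walk.length_reverse]
    omega

/-- Let `G` be a graph and `{(v_i, r_i)}` a family such that for every pair `i ≠ j` there
exists `x_{ij}` with `d(x_{ij}, v_i) ≤ r_i`, `d(x_{ij}, v_j) ≤ r_j`, and
`d(x_{ij}, v_m) > r_m` for `m ∉ {i,j}`.  For distinct `i, j, k, l`, any good `ij`-path and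
any good `kl`-path are vertex-disjoint, where a good `ij`-path is the concatenation of a
path of length at most `r_i` from `v_i` to `x_{ij}` and a path of length at most `r_j`
from `x_{ij}` to `v_j`. -/
theorem statement15 {V ι : Type*} (G : SimpleGraph V) (v : ι → V) (r : ι → ℕ)
    (x : ι → ι → V)
    (hx : ∀ i j : ι, i ≠ j →
      G.dist (x i j) (v i) ≤ r i ∧ G.dist (x i j) (v j) ≤ r j ∧
        ∀ m : ι, m ≠ i → m ≠ j → r m < G.dist (x i j) (v m))
    (i j k l : ι) (hij : i ≠ j) (hkl : k ≠ l)
    (hik : i ≠ k) (hil : i ≠ l) (hjk : j ≠ k) (hjl : j ≠ l)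
    (P₁ : G.Walk (v i) (x i j)) (Q₁ : G.Walk (x i j) (v j))
    (hP₁ : P₁.IsPath) (hQ₁ : Q₁.IsPath)
    (hP₁len : P₁.length ≤ r i) (hQ₁len : Q₁.length ≤ r j)
    (P₂ : G.Walk (v k) (x k l)) (Q₂ : G.Walk (x k l) (v l))
    (hP₂ : P₂.IsPath) (hQ₂ : Q₂.IsPath)
    (hP₂len : P₂.length ≤ r k) (hQ₂len : Q₂.length ≤ r l) :
    ∀ w : V, w ∈ (P₁.append Q₁).support → w ∉ (P₂.append Q₂).support := by
  intro w hw1 hw2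
  -- extract index p ∈ {i,j} with walks w → x i j and v p → w of total length ≤ r p
  have h1 := aux_mem_append P₁ Q₁ hP₁len hQ₁len hw1
  have h2 := aux_mem_append P₂ Q₂ hP₂len hQ₂len hw2
  obtain ⟨p, hpk, hpl, A, B, hAB⟩ :
      ∃ p, p ≠ k ∧ p ≠ l ∧ ∃ (A : G.Walk w (x i j)) (B : G.Walk (v p) w),
        B.length + A.length ≤ r p := by
    rcases h1 with ⟨A, B, h⟩ | ⟨A, B, h⟩
    · exact ⟨i, hik, hil, A, B, h⟩
    · exact ⟨j, hjk, hjl, A, B, h⟩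
  obtain ⟨q, hqi, hqj, C, D, hCD⟩ :
      ∃ q, q ≠ i ∧ q ≠ j ∧ ∃ (C : G.Walk w (x k l)) (D : G.Walk (v q) w),
        D.length + C.length ≤ r q := by
    rcases h2 with ⟨C, D, h⟩ | ⟨C, D, h⟩
    · exact ⟨k, hik.symm, hjk.symm, C, D, h⟩
    · exact ⟨l, hil.symm, hjl.symm, C, D, h⟩
  have t1 : G.dist (x i j) (v q) ≤ A.length + D.length := by
    have := SimpleGraph.dist_le (A.reverse.append D.reverse)
    simpa [SimpleGraph.Walk.length_append] using this
  have t2 : G.dist (x k l) (v p) ≤ C.length + B.length := by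
    have := SimpleGraph.dist_le (C.reverse.append B.reverse)
    simpa [SimpleGraph.Walk.length_append] using this
  have u1 := (hx i j hij).2.2 q hqi hqj
  have u2 := (hx k l hkl).2.2 p hpk hpl
  omega
end

section
/- If G is an outerplanar graph with diameter d and a resolving set of size k, then G has order at most 2kd² − 2d² + d + 1. -/
/-- A graph is outerplanar iff it admits a crossing-free drawing with all vertices on a
circle: there is an injective placement of the vertices on a line (the circle cut at a
point) such that no two edges `{a,b}`, `{c,d}` interleave as `a < c < b < d`. -/
def SimpleGraph.IsOuterplanar {V : Type*} (G : SimpleGraph V) : Prop :=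
  ∃ f : V → ℕ, Function.Injective f ∧
    ∀ a b c d : V, f a < f c → f c < f b → f b < f d → G.Adj a b → ¬ G.Adj c d

/-!
Fix `x ∈ R` and split the vertices into the distance levels `d(x, ·) = i`, `0 ≤ i ≤ d`; level
`0` is `{x}`. List a level in the order of the outerplanar drawing. Two consecutive vertices of
the list are separated by some `y ∈ R \ {x}`, so the level has at most `1 + ∑ y` (number of
changes of `d(y, ·)` along the list) vertices. Read cyclically starting just after `y`, the
sequence `d(y, ·)` has no strict valley `a > b < c`: a geodesic from `y` to the middle vertex has
to meet the geodesics from `x` to the outer two. A sequence without strict valleys with values in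
`[0, d]` changes at most `2d` times, so every level has at most `1 + 2d(k - 1)` vertices.
-/

open Finset

namespace List

variable {α : Type*}

def numChanges [DecidableEq α] : List α → ℕ
  | a :: b :: t => (if a = b then 0 else 1) + numChanges (b :: t)
  | _ => 0

def Unimodal [LinearOrder α] (l : List α) : Prop :=
  ∀ a b c, [a, b, c] <+ l → min a c ≤ b

section numChanges

variable [DecidableEq α]

@[simp]
theorem numChanges_nil : numChanges ([] : List α) = 0 := rfl

@[simp]
theorem numChanges_singleton (a : α) : numChanges [a] = 0 := rfl

@[simp]
theorem numChanges_cons_cons (a b : α) (l : List α) :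
    numChanges (a :: b :: l) = (if a = b then 0 else 1) + numChanges (b :: l) := rfl

theorem numChanges_le_numChanges_cons (a : α) (l : List α) :
    numChanges l ≤ numChanges (a :: l) := by
  cases l <;> simp

theorem numChanges_append_le :
    ∀ u v : List α, numChanges (u ++ v) ≤ numChanges u + numChanges v + 1
  | [], v => by simp
  | [a], [] => by simp
  | [a], b :: v => by simp only [singleton_append, numChanges_cons_cons]; split <;> omega
  | a :: b :: u, v => by
    have := numChanges_append_le (b :: u) v
    simp only [cons_append, numChanges_cons_cons] at this ⊢
    omega

theorem add_numChanges_le_numChanges_append :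
    ∀ u v : List α, numChanges u + numChanges v ≤ numChanges (u ++ v)
  | [], v => by simp
  | [a], v => by simpa using numChanges_le_numChanges_cons a v
  | a :: b :: u, v => by
    have := add_numChanges_le_numChanges_append (b :: u) v
    simp only [cons_append, numChanges_cons_cons] at this ⊢
    omega

end numChanges

theorem length_le_one_add_sum_numChanges {ι β : Type*} [DecidableEq β] (S : Finset ι)
    (φ : ι → α → β) :
    ∀ {l : List α}, l.IsChain (fun a b => ∃ i ∈ S, φ i a ≠ φ i b) →
      l.length ≤ 1 + ∑ i ∈ S, numChanges (l.map (φ i))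
  | [], _ => by simp
  | [_], _ => by simp
  | a :: b :: t, h => by
    obtain ⟨⟨i, hi, hne⟩, ht⟩ := isChain_cons_cons.mp h
    have ih := length_le_one_add_sum_numChanges S φ ht
    have : ∑ j ∈ S, numChanges ((b :: t).map (φ j)) <
        ∑ j ∈ S, numChanges ((a :: b :: t).map (φ j)) :=
      Finset.sum_lt_sum (fun j _ => numChanges_le_numChanges_cons _ _) ⟨i, hi, by simp [hne]⟩
    simp only [length_cons] at ih ⊢
    omega

theorem Unimodal.sublist [LinearOrder α] {l l' : List α} (h : l.Unimodal) (hl : l' <+ l) :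
    l'.Unimodal :=
  fun a b c habc => h a b c (habc.trans hl)

theorem Unimodal.numChanges_add_getLastD_le_of_lt {c : ℕ} :
    ∀ {a : ℕ} {t : List ℕ}, (c :: a :: t).Unimodal → a < c →
      numChanges (a :: t) + (a :: t).getLastD 0 ≤ a
  | a, [], _, _ => by simp
  | a, b :: t, h, hac => by
    have hba : min c b ≤ a := h c a b (by simp)
    have ih := numChanges_add_getLastD_le_of_lt (h.sublist (.cons_cons _ (sublist_cons_self _ _)))
      (by omega : b < c)
    simp only [numChanges_cons_cons, getLastD_cons] at ih ⊢
    split <;> omega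

theorem Unimodal.numChanges_add_headD_add_getLastD_le {d : ℕ} :
    ∀ {l : List ℕ}, l.Unimodal → (∀ x ∈ l, x ≤ d) →
      numChanges l + l.headD 0 + l.getLastD 0 ≤ 2 * d
  | [], _, _ => by simp
  | [a], _, hd => by
    have := hd a (by simp)
    simp only [numChanges_singleton, headD_cons, getLastD_cons, getLastD_nil]
    omega
  | a :: b :: t, h, hd => by
    have ha := hd a (by simp)
    have hb := hd b (by simp)
    rcases lt_or_ge a b with hab | hba
    · have ih := numChanges_add_headD_add_getLastD_le (h.sublist (by simp))
        (fun x hx => hd x (mem_cons_of_mem a hx))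
      simp only [numChanges_cons_cons, headD_cons, getLastD_cons] at ih ⊢
      split <;> omega
    · rcases hba.lt_or_eq with hba | rfl
      · have := numChanges_add_getLastD_le_of_lt h hba
        simp only [numChanges_cons_cons, headD_cons, getLastD_cons] at this ⊢
        split <;> omega
      · have ih := numChanges_add_headD_add_getLastD_le (h.sublist (sublist_cons_self _ _))
          (fun x hx => hd x (mem_cons_of_mem _ hx))
        simpa using ih

/-- The cyclic rotation `v ++ u` of `u ++ v` has at most one change fewer; it is paid for by the
first entry of `v`, which is positive. -/
theorem Unimodal.numChanges_append_le_of_rotate {d : ℕ} {u v : List ℕ} (h : (v ++ u).Unimodal)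
    (hd : ∀ x ∈ v ++ u, x ≤ d) (hv : 0 ∉ v) : numChanges (u ++ v) ≤ 2 * d := by
  have hbound := h.numChanges_add_headD_add_getLastD_le hd
  rcases v with _ | ⟨b, v⟩
  · simp only [nil_append, append_nil] at hbound ⊢
    omega
  · have hb : b ≠ 0 := fun hb => hv (hb ▸ mem_cons_self)
    have h₁ := numChanges_append_le u (b :: v)
    have h₂ := add_numChanges_le_numChanges_append (b :: v) u
    simp only [cons_append, headD_cons] at hbound h₂
    omega

theorem Pairwise.lt_of_mem_dropWhile {f : α → ℕ} {t : ℕ} :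
    ∀ {l : List α}, l.Pairwise (fun a b => f a < f b) →
      ∀ z ∈ l.dropWhile (fun z => f z ≤ t), t < f z
  | [], _, z, hz => by simp at hz
  | a :: l, hl, z, hz => by
    rw [pairwise_cons] at hl
    by_cases ha : f a ≤ t
    · rw [dropWhile_cons_of_pos (by simpa using ha)] at hz
      exact hl.2.lt_of_mem_dropWhile z hz
    · rw [dropWhile_cons_of_neg (by simpa using ha)] at hz
      rcases mem_cons.mp hz with rfl | hz
      · omega
      · have := hl.1 z hz
        omega

end List

namespace SimpleGraph

variable {V : Type*} {G : SimpleGraph V}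

theorem Walk.dist_add_dist_le_length_s18 {u v z : V} (P : G.Walk u v) (hz : z ∈ P.support) :
    G.dist u z + G.dist z v ≤ P.length := by
  classical
  calc G.dist u z + G.dist z v ≤ (P.takeUntil z hz).length + (P.dropUntil z hz).length :=
        add_le_add (dist_le _) (dist_le _)
    _ = P.length := by rw [← Walk.length_append, Walk.take_spec]

theorem Connected.dist_le_of_geodesics_meet (hG : G.Connected) {x y u v z : V}
    {P : G.Walk x u} {Q : G.Walk y v} (hP : P.length = G.dist x v) (hQ : Q.length = G.dist y v)
    (hzP : z ∈ P.support) (hzQ : z ∈ Q.support) : G.dist y u ≤ G.dist y v := by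
  have hxzu := P.dist_add_dist_le_length_s18 hzP
  have hyzv := Q.dist_add_dist_le_length_s18 hzQ
  have hxzv : G.dist x v ≤ G.dist x z + G.dist z v := hG.dist_triangle
  have hyzu : G.dist y u ≤ G.dist y z + G.dist z u := hG.dist_triangle
  omega

structure IsOuterplanarLabelling (G : SimpleGraph V) (f : V → ℕ) : Prop where
  injective : Function.Injective f
  not_adj : ∀ a b c d : V, f a < f c → f c < f b → f b < f d → G.Adj a b → ¬ G.Adj c d

namespace IsOuterplanarLabelling

variable {f : V → ℕ} (hf : G.IsOuterplanarLabelling f)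
include hf

/-- Cutting the circle of the drawing just after position `t` instead: whether two chords
interleave does not depend on where the circle is cut. -/
theorem rotate (t N : ℕ) (hN : ∀ z, f z < N) :
    G.IsOuterplanarLabelling fun z => if f z ≤ t then f z + N else f z where
  injective a b hab := by
    have := hN a
    have := hN b
    dsimp only at hab
    exact hf.injective (by split_ifs at hab <;> omega)
  not_adj a b c d hac hcb hbd hab hcd := by
    have := hN a
    have := hN b
    have := hN c
    have := hN d
    split_ifs at hac hcb hbd <;>
      first
      | exact hf.not_adj a b c d (by omega) (by omega) (by omega) hab hcd
      | exact hf.not_adj d c a b (by omega) (by omega) (by omega) hcd.symm hab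
      | exact hf.not_adj b a d c (by omega) (by omega) (by omega) hab.symm hcd.symm
      | exact hf.not_adj c d b a (by omega) (by omega) (by omega) hcd hab.symm

/-- An edge `ab` separates the arc strictly between `a` and `b` from the rest of the circle. -/
theorem mem_support_of_adj {a b : V} (hab : G.Adj a b) {s t : V} (W : G.Walk s t)
    (hs : f a < f s) (hs' : f s < f b) (ht : ¬(f a < f t ∧ f t < f b)) :
    a ∈ W.support ∨ b ∈ W.support := by
  induction W with
  | nil => exact absurd ⟨hs, hs'⟩ ht
  | @cons s p t hsp W ih =>
    have hpW := W.start_mem_support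
    by_cases hp : f a < f p ∧ f p < f b
    · exact (ih hp.1 hp.2 ht).imp (List.mem_cons_of_mem s) (List.mem_cons_of_mem s)
    rcases lt_trichotomy (f p) (f a) with hpa | hpa | hpa
    · exact absurd hab (hf.not_adj p s a b hpa hs hs' hsp.symm)
    · exact .inl (List.mem_cons_of_mem s (hf.injective hpa ▸ hpW))
    rcases lt_trichotomy (f p) (f b) with hpb | hpb | hpb
    · exact absurd ⟨hpa, hpb⟩ hp
    · exact .inr (List.mem_cons_of_mem s (hf.injective hpb ▸ hpW))
    · exact absurd hsp (hf.not_adj a b s p hs hs' hpb hab)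

theorem exists_mem_support_of_walk {a b : V} (W₀ : G.Walk a b) {s t : V} (W : G.Walk s t)
    (hs : f a < f s) (hs' : f s < f b) (ht : ¬(f a < f t ∧ f t < f b)) :
    ∃ z ∈ W.support, z ∈ W₀.support := by
  induction W with
  | nil => exact absurd ⟨hs, hs'⟩ ht
  | @cons s p t hsp W ih =>
    have hpW := W.start_mem_support
    by_cases hp : f a < f p ∧ f p < f b
    · obtain ⟨z, hzW, hzW₀⟩ := ih hp.1 hp.2 ht
      exact ⟨z, List.mem_cons_of_mem s hzW, hzW₀⟩
    rcases lt_trichotomy (f p) (f a) with hpa | hpa | hpa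
    · rcases hf.mem_support_of_adj hsp.symm W₀ hpa hs (by omega) with h | h
      · exact ⟨p, List.mem_cons_of_mem s hpW, h⟩
      · exact ⟨s, List.mem_cons_self, h⟩
    · exact ⟨p, List.mem_cons_of_mem s hpW, hf.injective hpa ▸ W₀.start_mem_support⟩
    rcases lt_trichotomy (f p) (f b) with hpb | hpb | hpb
    · exact absurd ⟨hpa, hpb⟩ hp
    · exact ⟨p, List.mem_cons_of_mem s hpW, hf.injective hpb ▸ W₀.end_mem_support⟩
    · rcases hf.mem_support_of_adj hsp W₀.reverse hs' hpb (by omega) with h | h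
      · exact ⟨s, List.mem_cons_self, by simpa using h⟩
      · exact ⟨p, List.mem_cons_of_mem s hpW, by simpa using h⟩

/-- A geodesic from `y` to `v` must meet the path `u ⇝ x ⇝ w` made of two geodesics. -/
theorem min_dist_le_dist (hG : G.Connected) {x y u v w : V} (hu : G.dist x u = G.dist x v)
    (hw : G.dist x w = G.dist x v) (huv : f u < f v) (hvw : f v < f w) (hwy : f w < f y) :
    min (G.dist y u) (G.dist y w) ≤ G.dist y v := by
  obtain ⟨Pu, hPu⟩ := hG.exists_walk_length_eq_dist x u
  obtain ⟨Pw, hPw⟩ := hG.exists_walk_length_eq_dist x w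
  obtain ⟨Q, hQ⟩ := hG.exists_walk_length_eq_dist y v
  obtain ⟨z, hzQ, hzP⟩ :=
    hf.exists_mem_support_of_walk (Pu.reverse.append Pw) Q.reverse huv hvw (by omega)
  rw [Walk.support_reverse, List.mem_reverse] at hzQ
  rw [Walk.mem_support_append_iff, Walk.support_reverse, List.mem_reverse] at hzP
  rcases hzP with hzP | hzP
  · exact min_le_of_left_le (hG.dist_le_of_geodesics_meet (hPu.trans hu) hQ hzP hzQ)
  · exact min_le_of_right_le (hG.dist_le_of_geodesics_meet (hPw.trans hw) hQ hzP hzQ)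

theorem unimodal_map_dist (hG : G.Connected) {x y : V} {i : ℕ} {l : List V}
    (hl : l.Pairwise (fun a b => f a < f b)) (hly : ∀ z ∈ l, f z ≤ f y)
    (hli : ∀ z ∈ l, G.dist x z = i) : (l.map (G.dist y)).Unimodal := by
  intro a b c habc
  obtain ⟨l', hl', hmap⟩ := List.sublist_map_iff.mp habc
  rcases l' with _ | ⟨u, _ | ⟨v, _ | ⟨w, _ | ⟨_, _⟩⟩⟩⟩ <;>
    simp only [List.map_cons, List.map_nil, List.cons.injEq, reduceCtorEq, and_false] at hmap
  obtain ⟨rfl, rfl, rfl, -⟩ := hmap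
  obtain ⟨hu, hv, hw⟩ : u ∈ l ∧ v ∈ l ∧ w ∈ l :=
    ⟨hl'.subset (by simp), hl'.subset (by simp), hl'.subset (by simp)⟩
  have hsorted := hl.sublist hl'
  simp only [List.pairwise_cons, List.mem_cons, List.not_mem_nil, forall_eq_or_imp] at hsorted
  obtain rfl | hwy := eq_or_ne w y
  · simp
  refine hf.min_dist_le_dist hG ((hli u hu).trans (hli v hv).symm)
    ((hli w hw).trans (hli v hv).symm) hsorted.1.1 hsorted.2.1.1
    ((hly w hw).lt_of_ne fun h => hwy (hf.injective h))

theorem numChanges_map_dist_le [Finite V] (hG : G.Connected) {d : ℕ}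
    (hdiam : ∀ p q : V, G.dist p q ≤ d) {x : V} {i : ℕ} {l : List V}
    (hl : l.Pairwise (fun a b => f a < f b)) (hli : ∀ z ∈ l, G.dist x z = i) (y : V) :
    (l.map (G.dist y)).numChanges ≤ 2 * d := by
  obtain ⟨N, hN⟩ : ∃ N, ∀ z, f z < N := by
    obtain ⟨N, hN⟩ := (Set.finite_range f).bddAbove
    exact ⟨N + 1, fun z => Nat.lt_succ_of_le (hN ⟨z, rfl⟩)⟩
  set g : V → ℕ := fun z => if f z ≤ f y then f z + N else f z with hg
  set la := l.takeWhile (fun z => f z ≤ f y)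
  set lb := l.dropWhile (fun z => f z ≤ f y)
  have hla : ∀ z ∈ la, f z ≤ f y := fun z hz => by simpa using List.mem_takeWhile_imp hz
  have hlb : ∀ z ∈ lb, f y < f z := hl.lt_of_mem_dropWhile
  have hl_eq : la ++ lb = l := List.takeWhile_append_dropWhile
  have hsub : ∀ z ∈ lb ++ la, z ∈ l := fun z hz => by
    rw [← hl_eq]; simp only [List.mem_append] at hz ⊢; tauto
  have hrot : (lb ++ la).Pairwise (fun a b => g a < g b) := by
    rw [← hl_eq, List.pairwise_append] at hl
    refine List.pairwise_append.mpr ⟨?_, ?_, fun a ha b hb => ?_⟩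
    · refine hl.2.1.imp_of_mem fun {a b} ha hb hab => ?_
      simp only [hg, if_neg (hlb a ha).not_ge, if_neg (hlb b hb).not_ge, hab]
    · refine hl.1.imp_of_mem fun {a b} ha hb hab => ?_
      simp only [hg, if_pos (hla a ha), if_pos (hla b hb)]
      omega
    · simp only [hg, if_neg (hlb a ha).not_ge, if_pos (hla b hb)]
      have := hN a
      omega
  have hy : ∀ z ∈ lb ++ la, g z ≤ g y := fun z hz => by
    have := hN z
    simp only [hg, le_refl, if_true]
    split <;> omega
  rw [← hl_eq, List.map_append]
  refine List.Unimodal.numChanges_append_le_of_rotate ?_ ?_ ?_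
  · rw [← List.map_append]
    exact (hf.rotate (f y) N hN).unimodal_map_dist hG hrot hy fun z hz => hli z (hsub z hz)
  · simp only [← List.map_append, List.mem_map]
    rintro _ ⟨z, -, rfl⟩
    exact hdiam y z
  · simp only [List.mem_map, not_exists, not_and]
    intro z hz h0
    exact (hlb z hz).ne (by rw [(hG.dist_eq_zero_iff).mp h0])

theorem card_dist_eq_le [Fintype V] [DecidableEq V] (hG : G.Connected) {d : ℕ}
    (hdiam : ∀ p q : V, G.dist p q ≤ d) {R : Finset V} (hR : G.IsResolvingSet R) (x : V)
    (i : ℕ) : #{v | G.dist x v = i} ≤ 1 + 2 * d * #(R.erase x) := by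
  set L : Finset V := {v | G.dist x v = i}
  obtain ⟨l, hl, hl_len, hl_mem⟩ : ∃ l : List V,
      l.Pairwise (fun a b => f a < f b) ∧ l.length = #L ∧ ∀ z ∈ l, z ∈ L := by
    let : LinearOrder V := LinearOrder.lift' f hf.injective
    exact ⟨L.sort, L.sortedLT_sort.pairwise, L.length_sort _, fun z hz => (L.mem_sort _).mp hz⟩
  have hli : ∀ z ∈ l, G.dist x z = i := fun z hz => (mem_filter.mp (hl_mem z hz)).2
  -- `x` itself cannot separate two vertices of the same level
  have hchain : l.IsChain fun a b => ∃ y ∈ R.erase x, G.dist y a ≠ G.dist y b := by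
    refine (hl.imp_of_mem fun {a b} ha hb hab => ?_).isChain
    obtain ⟨y, hyR, hy⟩ := hR a b (ne_of_apply_ne f hab.ne)
    refine ⟨y, mem_erase.mpr ⟨?_, hyR⟩, hy⟩
    rintro rfl
    exact hy ((hli a ha).trans (hli b hb).symm)
  calc #L = l.length := hl_len.symm
    _ ≤ 1 + ∑ y ∈ R.erase x, (l.map (G.dist y)).numChanges :=
      List.length_le_one_add_sum_numChanges _ _ hchain
    _ ≤ 1 + ∑ _y ∈ R.erase x, 2 * d := by
      gcongr with y
      exact hf.numChanges_map_dist_le hG hdiam hl hli y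
    _ = 1 + 2 * d * #(R.erase x) := by rw [sum_const, smul_eq_mul, mul_comm]

end IsOuterplanarLabelling

theorem Connected.card_le_one_add_mul [Fintype V] (hG : G.Connected) (x : V) {d m : ℕ}
    (hdist : ∀ v, G.dist x v ≤ d) (hlevel : ∀ i, #{v | G.dist x v = i + 1} ≤ m) :
    Fintype.card V ≤ 1 + d * m := by
  have hzero : #{v | G.dist x v = 0} ≤ 1 :=
    card_le_one.mpr fun a ha b hb => by
      simp only [mem_filter, mem_univ, true_and, hG.dist_eq_zero_iff] at ha hb
      rw [← ha, hb]
  calc Fintype.card V = ∑ i ∈ range (d + 1), #{v | G.dist x v = i} :=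
        card_eq_sum_card_fiberwise fun v _ => mem_range.mpr (Nat.lt_succ_of_le (hdist v))
    _ = ∑ i ∈ range d, #{v | G.dist x v = i + 1} + #{v | G.dist x v = 0} := sum_range_succ' _ _
    _ ≤ ∑ _i ∈ range d, m + 1 := by gcongr with i; exact hlevel i
    _ = 1 + d * m := by rw [sum_const, card_range, smul_eq_mul, add_comm]

end SimpleGraph

/-- If `G` is an outerplanar graph with diameter `d` and a resolving set of size `k`, then
`G` has order at most `2kd² − 2d² + d + 1`. -/
theorem statement18 {V : Type*} [Fintype V] (G : SimpleGraph V) (hG : G.Connected)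
    (houter : G.IsOuterplanar) (d k : ℕ) (hd : G.diam = d)
    (R : Finset V) (hR : G.IsResolvingSet ↑R) (hk : R.card = k) :
    Fintype.card V ≤ 2 * k * d ^ 2 - 2 * d ^ 2 + d + 1 := by
  classical
  obtain ⟨f, hf_inj, hf_not_adj⟩ := houter
  have hf : G.IsOuterplanarLabelling f := ⟨hf_inj, hf_not_adj⟩
  have : Nonempty V := hG.nonempty
  have hdiam : ∀ p q : V, G.dist p q ≤ d := fun p q =>
    hd ▸ G.dist_le_diam (SimpleGraph.connected_iff_ediam_ne_top.mp hG)
  obtain ⟨x, hx⟩ : ∃ x, #(R.erase x) = k - 1 := by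
    rcases R.eq_empty_or_nonempty with rfl | ⟨x, hx⟩
    · exact ⟨Classical.arbitrary V, by simp [← hk]⟩
    · exact ⟨x, by rw [card_erase_of_mem hx, hk]⟩
  calc Fintype.card V ≤ 1 + d * (1 + 2 * d * (k - 1)) :=
        hG.card_le_one_add_mul x (hdiam x) fun i => hx ▸ hf.card_dist_eq_le hG hdiam hR x (i + 1)
    _ = 2 * k * d ^ 2 - 2 * d ^ 2 + d + 1 := by
      rcases k with _ | k
      · simp [add_comm]
      · rw [show 2 * (k + 1) * d ^ 2 = 2 * k * d ^ 2 + 2 * d ^ 2 by ring, Nat.add_sub_cancel]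
        simp only [add_tsub_cancel_right]
        ring
end

section
/- For k ≥ 2 and even d, the hairy spider HS_{d,k} is a tree of diameter d, metric dimension k, and order (1/8)(kd+4)(d+2). -/
/-- Vertices of one copy of the rooted tree `L_r` (without its root): a pair `(i, j)`
with `1 ≤ i ≤ r` and `0 ≤ j ≤ r - i`; the vertex `(i, 0)` is the spine vertex `v_i`,
and for `j ≥ 1` the vertex `(i, j)` is the `j`-th vertex of the path of length `r - i`
attached at `v_i`. -/
def LVert (r : ℕ) : Type :=
  {p : Fin (r + 1) × Fin (r + 1) // 1 ≤ (p.1 : ℕ) ∧ (p.2 : ℕ) ≤ r - (p.1 : ℕ)}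

/-- Vertices of the hairy spider `HS_{2r,k}`: the root, a pendant path of length `r`,
and `k` copies of `L_r` minus their (identified) roots. -/
def HSVert (r k : ℕ) : Type :=
  Unit ⊕ Fin r ⊕ (Fin k × LVert r)

/-- The edge relation of the hairy spider (before symmetrisation). -/
def hsRel (r k : ℕ) : HSVert r k → HSVert r k → Prop
  | Sum.inl _, Sum.inr (Sum.inl t) => (t : ℕ) = 0
  | Sum.inr (Sum.inl t), Sum.inr (Sum.inl t') => (t' : ℕ) = (t : ℕ) + 1
  | Sum.inl _, Sum.inr (Sum.inr (_, p)) => (p.1.1 : ℕ) = 1 ∧ (p.1.2 : ℕ) = 0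
  | Sum.inr (Sum.inr (c, p)), Sum.inr (Sum.inr (c', p')) =>
      c = c' ∧
        (((p'.1.1 : ℕ) = (p.1.1 : ℕ) + 1 ∧ (p.1.2 : ℕ) = 0 ∧ (p'.1.2 : ℕ) = 0) ∨
          ((p'.1.1 : ℕ) = (p.1.1 : ℕ) ∧ (p'.1.2 : ℕ) = (p.1.2 : ℕ) + 1))
  | _, _ => False

/-- The hairy spider `HS_{d,k}` (with `d = 2r`): obtained from `k` disjoint copies of
`L_r` and one path `P_r*` by identifying all their roots into a single vertex. -/
def HS (r k : ℕ) : SimpleGraph (HSVert r k) := SimpleGraph.fromRel (hsRel r k)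

instance (r k : ℕ) : Fintype (HSVert r k) := by
  unfold HSVert LVert; infer_instance

namespace SimpleGraph

variable {V : Type*} {G : SimpleGraph V}

lemma le_add_length_of_lipschitz {f : V → ℕ} (hf : ∀ a b, G.Adj a b → f b ≤ f a + 1)
    {u v : V} (p : G.Walk u v) : f v ≤ f u + p.length := by
  induction p with
  | nil => simp
  | @cons a b c h q ih => have := hf a b h; simp only [Walk.length_cons]; omega

lemma exists_walk_length_le_of_descent {w : V} {f : V → ℕ}
    (hf : ∀ v, v ≠ w → ∃ u, G.Adj u v ∧ f u + 1 = f v) (v : V) :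
    ∃ p : G.Walk w v, p.length ≤ f v := by
  induction hn : f v using Nat.strong_induction_on generalizing v with
  | _ n ih =>
    by_cases hv : v = w
    · subst hv; exact ⟨.nil, by simp⟩
    obtain ⟨u, hu, hfu⟩ := hf v hv
    obtain ⟨p, hp⟩ := ih (f u) (by omega) u rfl
    exact ⟨p.concat hu, by simp; omega⟩

lemma dist_eq_of_descent {w : V} {f : V → ℕ} (hw : f w = 0)
    (hlip : ∀ a b, G.Adj a b → f b ≤ f a + 1)
    (hf : ∀ v, v ≠ w → ∃ u, G.Adj u v ∧ f u + 1 = f v) (v : V) : G.dist w v = f v := by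
  obtain ⟨p, hp⟩ := exists_walk_length_le_of_descent hf v
  obtain ⟨q, hq⟩ := p.reachable.exists_walk_length_eq_dist
  have := le_add_length_of_lipschitz hlip q
  have := dist_le p
  omega

lemma isAcyclic_of_unique_lower_adj (f : V → ℕ) (hne : ∀ u v, G.Adj u v → f u ≠ f v)
    (huniq : ∀ u u' v, G.Adj u v → G.Adj u' v → f u < f v → f u' < f v → u = u') :
    G.IsAcyclic := by
  intro x c hc
  classical
  -- the two neighbours on the cycle of a maximum of `f` are both lower, hence equal
  obtain ⟨m, hm, hmax⟩ := c.support.toFinset.exists_max_image f ⟨x, by simp⟩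
  rw [List.mem_toFinset] at hm
  set c' := c.rotate m hm
  have hc' : c'.IsCycle := hc.rotate hm
  have hsub : ∀ y ∈ c'.support, f y ≤ f m := fun y hy ↦
    hmax y (by simpa [c'] using hy)
  have hlower : ∀ y, G.Adj y m → y ∈ c'.support → f y < f m := fun y hy hmem ↦
    lt_of_le_of_ne (hsub y hmem) (hne y m hy)
  refine hc'.snd_ne_penultimate (huniq _ _ m (c'.adj_snd hc'.not_nil).symm
    (c'.adj_penultimate hc'.not_nil) ?_ ?_)
  · exact hlower _ (c'.adj_snd hc'.not_nil).symm (c'.getVert_mem_support 1)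
  · exact hlower _ (c'.adj_penultimate hc'.not_nil) (c'.getVert_mem_support _)

lemma dist_eq_dist_add_one_of_forall_adj (hG : G.Connected) {v m : V} (hm : G.Adj m v)
    (huniq : ∀ x, G.Adj x v → x = m) {z : V} (hz : z ≠ v) :
    G.dist z v = G.dist z m + 1 := by
  refine le_antisymm ?_ ?_
  · calc G.dist z v ≤ G.dist z m + G.dist m v := hG.dist_triangle
    _ = G.dist z m + 1 := by rw [dist_eq_one_iff_adj.mpr hm]
  · obtain ⟨p, hp⟩ := (hG z v).exists_walk_length_eq_dist
    have hnil : ¬ p.Nil := Walk.not_nil_of_ne hz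
    have := dist_le (p.dropLast.copy rfl (huniq _ (p.adj_penultimate hnil)))
    rw [Walk.length_copy, Walk.length_dropLast] at this
    have := Walk.not_nil_iff_lt_length.mp hnil
    omega

lemma diam_eq_of_forall_dist_le [Finite V] (hG : G.Connected) {n : ℕ}
    (hle : ∀ u v, G.dist u v ≤ n) {u v : V} (huv : G.dist u v = n) : G.diam = n := by
  have : Nonempty V := ⟨u⟩
  obtain ⟨a, b, hab⟩ := G.exists_dist_eq_diam
  exact le_antisymm (hab ▸ hle a b) (huv ▸ dist_le_diam (connected_iff_ediam_ne_top.mp hG))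

lemma IsResolvingSet.mem_or_mem {R : Set V} (hR : G.IsResolvingSet R) {a b : V} (hab : a ≠ b)
    (htwin : ∀ z, z ≠ a → z ≠ b → G.dist z a = G.dist z b) : a ∈ R ∨ b ∈ R := by
  by_contra! h
  obtain ⟨z, hz, hne⟩ := hR a b hab
  exact hne (htwin z (fun hza ↦ h.1 (hza ▸ hz)) (fun hzb ↦ h.2 (hzb ▸ hz)))

lemma IsResolvingSet.card_sdiff_le_one [DecidableEq V] {R S : Finset V}
    (hR : G.IsResolvingSet R)
    (htwin : ∀ a ∈ S, ∀ b ∈ S, ∀ z, z ≠ a → z ≠ b → G.dist z a = G.dist z b) :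
    (S \ R).card ≤ 1 := by
  refine Finset.card_le_one.mpr fun a ha b hb ↦ ?_
  rw [Finset.mem_sdiff] at ha hb
  by_contra hab
  rcases hR.mem_or_mem hab (htwin a ha.1 b hb.1) with h | h
  exacts [ha.2 h, hb.2 h]

end SimpleGraph

namespace HS

variable {r k : ℕ}

def root (r k : ℕ) : HSVert r k := Sum.inl ()

def pathVert (t : ℕ) (ht : t < r) : HSVert r k := Sum.inr (Sum.inl ⟨t, ht⟩)

def copyVert (c : Fin k) (i j : ℕ) (hi : 1 ≤ i) (hij : i + j ≤ r) : HSVert r k :=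
  Sum.inr (Sum.inr (c, ⟨(⟨i, by omega⟩, ⟨j, by omega⟩), hi, by simp; omega⟩))

theorem vert_cases {motive : HSVert r k → Prop} (root : motive (root r k))
    (path : ∀ t ht, motive (pathVert t ht))
    (copy : ∀ c i j hi hij, motive (copyVert c i j hi hij)) : ∀ v, motive v
  | Sum.inl () => root
  | Sum.inr (Sum.inl t) => path t t.isLt
  | Sum.inr (Sum.inr (c, p)) =>
    copy c p.1.1 p.1.2 p.2.1 (by have := p.2.2; have := p.1.1.isLt; omega)

@[simp] lemma pathVert_inj {t t' : ℕ} {ht ht'} :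
    (pathVert t ht : HSVert r k) = pathVert t' ht' ↔ t = t' := by
  refine ⟨fun h ↦ ?_, fun h ↦ by subst h; rfl⟩
  injection h with h
  injection h with h
  exact Fin.mk.inj h

@[simp] lemma copyVert_inj {c c' : Fin k} {i j i' j' : ℕ} {hi hij hi' hij'} :
    (copyVert c i j hi hij : HSVert r k) = copyVert c' i' j' hi' hij' ↔
      c = c' ∧ i = i' ∧ j = j' := by
  refine ⟨fun h ↦ ?_, fun ⟨hc, hi, hj⟩ ↦ by subst hc hi hj; rfl⟩
  injection h with h
  injection h with h
  injection h with hc h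
  injection h with h
  injection h with h1 h2
  exact ⟨hc, Fin.mk.inj h1, Fin.mk.inj h2⟩

@[simp] lemma copyVert_ne_pathVert {t ht c i j hi hij} :
    (copyVert c i j hi hij : HSVert r k) ≠ pathVert t ht := nofun

section hsRel

variable {c c' : Fin k} {i j i' j' t t' : ℕ} {hi hij hi' hij' ht ht'}

@[simp] lemma hsRel_root_pathVert : hsRel r k (root r k) (pathVert t ht) ↔ t = 0 := Iff.rfl

@[simp] lemma hsRel_pathVert_pathVert :
    hsRel r k (pathVert t ht) (pathVert t' ht') ↔ t' = t + 1 := Iff.rfl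

@[simp] lemma hsRel_root_copyVert :
    hsRel r k (root r k) (copyVert c i j hi hij) ↔ i = 1 ∧ j = 0 := Iff.rfl

@[simp] lemma hsRel_copyVert_copyVert :
    hsRel r k (copyVert c i j hi hij) (copyVert c' i' j' hi' hij') ↔
      c = c' ∧ (i' = i + 1 ∧ j = 0 ∧ j' = 0 ∨ i' = i ∧ j' = j + 1) := Iff.rfl

@[simp] lemma not_hsRel_pathVert_copyVert :
    ¬ hsRel r k (pathVert t ht) (copyVert c i j hi hij) := id

@[simp] lemma not_hsRel_copyVert_pathVert :
    ¬ hsRel r k (copyVert c i j hi hij) (pathVert t ht) := id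

@[simp] lemma not_hsRel_root_right (u : HSVert r k) : ¬ hsRel r k u (root r k) := by
  cases u using vert_cases <;> exact id

end hsRel

def depth : HSVert r k → ℕ
  | Sum.inl _ => 0
  | Sum.inr (Sum.inl t) => t + 1
  | Sum.inr (Sum.inr (_, p)) => p.1.1 + p.1.2

@[simp] lemma depth_root : depth (root r k) = 0 := rfl
@[simp] lemma depth_pathVert {t ht} : depth (pathVert t ht : HSVert r k) = t + 1 := rfl
@[simp] lemma depth_copyVert {c i j hi hij} :
    depth (copyVert c i j hi hij : HSVert r k) = i + j := rfl

lemma depth_le (v : HSVert r k) : depth v ≤ r := by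
  cases v using vert_cases <;> simp <;> omega

lemma depth_add_one_of_hsRel {u v : HSVert r k} (h : hsRel r k u v) : depth u + 1 = depth v := by
  cases u using vert_cases <;> cases v using vert_cases <;> simp at h ⊢ <;> omega

lemma hsRel_left_unique {u u' v : HSVert r k} (h : hsRel r k u v) (h' : hsRel r k u' v) :
    u = u' := by
  cases u using vert_cases <;> cases u' using vert_cases <;> cases v using vert_cases <;>
    simp at h h' ⊢ <;> omega

lemma adj_iff {u v : HSVert r k} : (HS r k).Adj u v ↔ hsRel r k u v ∨ hsRel r k v u := by
  refine ⟨fun h ↦ (SimpleGraph.fromRel_adj _ _ _).mp h |>.2, fun h ↦ ?_⟩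
  refine (SimpleGraph.fromRel_adj _ _ _).mpr ⟨fun huv ↦ ?_, h⟩
  subst huv
  rcases h with h | h <;> have := depth_add_one_of_hsRel h <;> omega

lemma adj_of_hsRel {u v : HSVert r k} (h : hsRel r k u v) : (HS r k).Adj u v :=
  adj_iff.mpr (Or.inl h)

lemma depth_le_depth_add_one_of_adj {u v : HSVert r k} (h : (HS r k).Adj u v) :
    depth v ≤ depth u + 1 := by
  rcases adj_iff.mp h with h | h <;> have := depth_add_one_of_hsRel h <;> omega

lemma hsRel_of_adj_of_depth_le {u v : HSVert r k} (h : (HS r k).Adj u v)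
    (hle : depth u ≤ depth v) : hsRel r k u v := by
  refine (adj_iff.mp h).resolve_right fun h' ↦ ?_
  have := depth_add_one_of_hsRel h'
  omega

lemma exists_hsRel_of_ne_root {v : HSVert r k} (hv : v ≠ root r k) : ∃ u, hsRel r k u v := by
  cases v using vert_cases with
  | root => exact absurd rfl hv
  | path t ht =>
    rcases t with _ | t
    · exact ⟨root r k, rfl⟩
    · exact ⟨pathVert t (by omega), rfl⟩
  | copy c i j hi hij =>
    rcases j with _ | j
    · by_cases hi1 : i = 1
      · exact ⟨root r k, by simp [hi1]⟩
      · exact ⟨copyVert c (i - 1) 0 (by omega) (by omega), by simp; omega⟩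
    · exact ⟨copyVert c i j hi (by omega), by simp⟩

lemma exists_adj_depth_add_one (v : HSVert r k) (hv : v ≠ root r k) :
    ∃ u, (HS r k).Adj u v ∧ depth u + 1 = depth v := by
  obtain ⟨u, hu⟩ := exists_hsRel_of_ne_root hv
  exact ⟨u, adj_of_hsRel hu, depth_add_one_of_hsRel hu⟩

lemma dist_root (v : HSVert r k) : (HS r k).dist (root r k) v = depth v :=
  SimpleGraph.dist_eq_of_descent depth_root (fun _ _ ↦ depth_le_depth_add_one_of_adj)
    exists_adj_depth_add_one v

lemma connected : (HS r k).Connected := by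
  refine (HS r k).connected_iff_exists_forall_reachable.mpr ⟨root r k, fun v ↦ ?_⟩
  obtain ⟨p, -⟩ := SimpleGraph.exists_walk_length_le_of_descent exists_adj_depth_add_one v
  exact p.reachable

lemma isTree : (HS r k).IsTree := by
  refine ⟨connected, SimpleGraph.isAcyclic_of_unique_lower_adj depth ?_ ?_⟩
  · intro u v h
    rcases adj_iff.mp h with h | h <;> have := depth_add_one_of_hsRel h <;> omega
  · intro u u' v hu hu' hlt hlt'
    exact hsRel_left_unique (hsRel_of_adj_of_depth_le hu hlt.le)
      (hsRel_of_adj_of_depth_le hu' hlt'.le)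

lemma dist_eq_of_deepest_siblings {a b m : HSVert r k} (ha : depth a = r) (hb : depth b = r)
    (hma : hsRel r k m a) (hmb : hsRel r k m b) {z : HSVert r k} (hza : z ≠ a) (hzb : z ≠ b) :
    (HS r k).dist z a = (HS r k).dist z b := by
  have hleaf : ∀ {v}, depth v = r → hsRel r k m v → z ≠ v →
      (HS r k).dist z v = (HS r k).dist z m + 1 := fun hv hmv hzv ↦
    SimpleGraph.dist_eq_dist_add_one_of_forall_adj connected (adj_of_hsRel hmv)
      (fun x hx ↦ hsRel_left_unique
        (hsRel_of_adj_of_depth_le hx (by have := depth_le x; omega)) hmv) hzv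
  rw [hleaf ha hma hza, hleaf hb hmb hzb]

def spineEnd (c : Fin k) (hr : 1 ≤ r) : HSVert r k := copyVert c r 0 hr le_rfl

/-- Inside copy `c` go down the spine from `v_r` to `v_i` and up the hair; elsewhere pass
through the root. -/
def spineEndDist (c : Fin k) : HSVert r k → ℕ
  | Sum.inl _ => r
  | Sum.inr (Sum.inl t) => r + t + 1
  | Sum.inr (Sum.inr (c', p)) => if c' = c then r - p.1.1 + p.1.2 else r + p.1.1 + p.1.2

section spineEndDist

variable {c c' : Fin k} {i j t : ℕ} {hi hij ht}

@[simp] lemma spineEndDist_root : spineEndDist c (root r k) = r := rfl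

@[simp] lemma spineEndDist_pathVert :
    spineEndDist c (pathVert t ht : HSVert r k) = r + t + 1 := rfl

@[simp] lemma spineEndDist_copyVert : spineEndDist c (copyVert c' i j hi hij : HSVert r k) =
    if c' = c then r - i + j else r + i + j := rfl

end spineEndDist

lemma spineEndDist_le_add_one_of_hsRel (c : Fin k) {u v : HSVert r k} (h : hsRel r k u v) :
    spineEndDist c v ≤ spineEndDist c u + 1 ∧ spineEndDist c u ≤ spineEndDist c v + 1 := by
  cases u using vert_cases <;> cases v using vert_cases <;> simp at h <;>
    (try obtain ⟨rfl, h⟩ := h) <;> simp <;> (try split_ifs) <;> omega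

lemma spineEndDist_le_add_one_of_adj (c : Fin k) {u v : HSVert r k} (h : (HS r k).Adj u v) :
    spineEndDist c v ≤ spineEndDist c u + 1 := by
  rcases adj_iff.mp h with h | h
  exacts [(spineEndDist_le_add_one_of_hsRel c h).1, (spineEndDist_le_add_one_of_hsRel c h).2]

lemma exists_adj_spineEndDist_add_one (c : Fin k) (hr : 1 ≤ r) (v : HSVert r k)
    (hv : v ≠ spineEnd c hr) :
    ∃ u, (HS r k).Adj u v ∧ spineEndDist c u + 1 = spineEndDist c v := by
  cases v using vert_cases with
  | root => exact ⟨copyVert c 1 0 le_rfl hr, (adj_of_hsRel (by simp)).symm, by simp; omega⟩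
  | path t ht =>
    rcases t with _ | t
    · exact ⟨root r k, adj_of_hsRel rfl, by simp⟩
    · exact ⟨pathVert t (by omega), adj_of_hsRel rfl, by simp; omega⟩
  | copy c' i j hi hij =>
    rcases j with _ | j
    · by_cases hc : c' = c
      · subst hc
        have hir : i + 1 ≤ r := by by_contra; exact hv (by simp [spineEnd]; omega)
        exact ⟨copyVert c' (i + 1) 0 (by omega) hir, (adj_of_hsRel (by simp)).symm,
          by simp; omega⟩
      · by_cases hi1 : i = 1
        · exact ⟨root r k, adj_of_hsRel (by simp [hi1]), by simp [hc, hi1]⟩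
        · exact ⟨copyVert c' (i - 1) 0 (by omega) (by omega), adj_of_hsRel (by simp; omega),
            by simp [hc]; omega⟩
    · exact ⟨copyVert c' i j hi (by omega), adj_of_hsRel (by simp),
        by simp; split_ifs <;> omega⟩

lemma dist_spineEnd (c : Fin k) (hr : 1 ≤ r) (v : HSVert r k) :
    (HS r k).dist (spineEnd c hr) v = spineEndDist c v :=
  SimpleGraph.dist_eq_of_descent (by simp [spineEnd]) (fun _ _ ↦ spineEndDist_le_add_one_of_adj c)
    (exists_adj_spineEndDist_add_one c hr) v

lemma eq_of_forall_spineEndDist_eq (hk : 2 ≤ k) {u v : HSVert r k}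
    (h : ∀ c, spineEndDist c u = spineEndDist c v) : u = v := by
  have : Nontrivial (Fin k) := Fin.nontrivial_iff_two_le.mpr hk
  have h0 := h ⟨0, by omega⟩
  cases u using vert_cases with
  | root =>
    cases v using vert_cases with
    | root => rfl
    | path t ht => simp at h0; omega
    | copy c i j hi hij =>
      obtain ⟨c', hc'⟩ := exists_ne c
      have := h c'
      simp [hc'.symm] at this
      omega
  | path t ht =>
    cases v using vert_cases with
    | root => simp at h0; omega
    | path t' ht' => simpa using h0
    | copy c i j hi hij =>
      obtain ⟨c', hc'⟩ := exists_ne c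
      have h1 := h c
      have h2 := h c'
      simp [hc'.symm] at h1 h2
      omega
  | copy c i j hi hij =>
    obtain ⟨c', hc'⟩ := exists_ne c
    have h1 := h c
    have h2 := h c'
    cases v using vert_cases with
    | root => simp [hc'.symm] at h2; omega
    | path t ht => simp [hc'.symm] at h1 h2; omega
    | copy c₂ i₂ j₂ hi₂ hij₂ =>
      have h3 := h c₂
      by_cases hc : c = c₂
      · subst hc
        simp [hc'.symm] at h1 h2
        simp
        omega
      · simp [hc, Ne.symm hc] at h1 h3
        omega

lemma isResolvingSet_range_spineEnd (hk : 2 ≤ k) (hr : 1 ≤ r) :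
    (HS r k).IsResolvingSet (Set.range (spineEnd · hr)) := by
  intro u v huv
  by_contra! h
  exact huv (eq_of_forall_spineEndDist_eq hk fun c ↦ by
    simpa only [dist_spineEnd] using h _ ⟨c, rfl⟩)

lemma spineEnd_injective (hr : 1 ≤ r) :
    Function.Injective (spineEnd · hr : Fin k → HSVert r k) :=
  fun c c' h ↦ by simpa [spineEnd] using h

lemma le_card_of_isResolvingSet_of_eq_one {R : Finset (HSVert 1 k)}
    (hR : (HS 1 k).IsResolvingSet R) : k ≤ R.card := by
  classical
  set S : Finset (HSVert 1 k) :=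
    insert (pathVert 0 one_pos) (Finset.univ.image fun c ↦ copyVert c 1 0 le_rfl le_rfl)
  have hS : ∀ a ∈ S, depth a = 1 ∧ hsRel 1 k (root 1 k) a := by
    simp [S]
  have hcard : S.card = k + 1 := by
    rw [Finset.card_insert_of_notMem (by simp), Finset.card_image_of_injective _
      (fun c c' h ↦ by simpa using h), Finset.card_univ, Fintype.card_fin]
  have hsdiff := hR.card_sdiff_le_one fun a ha b hb z hza hzb ↦
    dist_eq_of_deepest_siblings (hS a ha).1 (hS b hb).1 (hS a ha).2 (hS b hb).2 hza hzb
  have := Finset.card_sdiff_add_card_inter S R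
  have := Finset.card_le_card (Finset.inter_subset_right (s₁ := S) (s₂ := R))
  omega

lemma le_card_of_isResolvingSet_of_two_le (hr : 2 ≤ r) {R : Finset (HSVert r k)}
    (hR : (HS r k).IsResolvingSet R) : k ≤ R.card := by
  have key : ∀ c : Fin k, ∃ x ∈ R, x = copyVert c r 0 (by omega) le_rfl ∨
      x = copyVert c (r - 1) 1 (by omega) (by omega) := by
    intro c
    rcases hR.mem_or_mem (a := copyVert c r 0 (by omega) le_rfl)
      (b := copyVert c (r - 1) 1 (by omega) (by omega)) (by simp)
      (fun z hza hzb ↦ dist_eq_of_deepest_siblings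
        (m := copyVert c (r - 1) 0 (by omega) (by omega)) (by simp) (by simp; omega)
        (by simp; omega) (by simp) hza hzb) with h | h
    exacts [⟨_, h, Or.inl rfl⟩, ⟨_, h, Or.inr rfl⟩]
  choose f hfR hf using key
  have hinj : Function.Injective f := fun c c' h ↦ by
    rcases hf c with hc | hc <;> rcases hf c' with hc' | hc' <;> simp_all
  simpa using Finset.card_le_card_of_injOn f (s := Finset.univ) (fun c _ ↦ hfR c) hinj.injOn

lemma le_card_of_isResolvingSet (hr : 1 ≤ r) {R : Finset (HSVert r k)}
    (hR : (HS r k).IsResolvingSet R) : k ≤ R.card := by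
  obtain rfl | hr2 : r = 1 ∨ 2 ≤ r := by omega
  exacts [le_card_of_isResolvingSet_of_eq_one hR, le_card_of_isResolvingSet_of_two_le hr2 hR]

lemma hasMetricDim (hk : 2 ≤ k) (hr : 1 ≤ r) : (HS r k).HasMetricDim k := by
  classical
  refine ⟨⟨Finset.univ.image (spineEnd · hr), ?_, ?_⟩,
    fun R hR ↦ le_card_of_isResolvingSet hr hR⟩
  · simpa using isResolvingSet_range_spineEnd hk hr
  · rw [Finset.card_image_of_injective _ (spineEnd_injective hr), Finset.card_univ,
      Fintype.card_fin]

lemma diam_eq (hk : 2 ≤ k) (hr : 1 ≤ r) : (HS r k).diam = 2 * r := by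
  refine SimpleGraph.diam_eq_of_forall_dist_le connected (fun u v ↦ ?_)
    (u := spineEnd ⟨0, by omega⟩ hr) (v := spineEnd ⟨1, by omega⟩ hr) ?_
  · calc (HS r k).dist u v ≤ (HS r k).dist (root r k) u + (HS r k).dist (root r k) v := by
          rw [(HS r k).dist_comm (u := root r k)]; exact connected.dist_triangle
      _ ≤ 2 * r := by rw [dist_root, dist_root]; have := depth_le u; have := depth_le v; omega
  · rw [dist_spineEnd]
    simp [spineEnd]
    omega

instance : Fintype (LVert r) := by
  unfold LVert; infer_instance

/-- `(i, j) ↦ (j, i + j)` identifies the vertices of `L_r` with the pairs `a < b`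
in `{0, …, r}`. -/
def lVertEquiv (r : ℕ) : LVert r ≃ {x : Fin (r + 1) × Fin (r + 1) // x.1 < x.2} where
  toFun p := ⟨(p.1.2, ⟨p.1.1 + p.1.2, by have := p.2.2; omega⟩), by
    show (p.1.2 : ℕ) < p.1.1 + p.1.2; have := p.2.1; omega⟩
  invFun x := ⟨(⟨x.1.2 - x.1.1, by omega⟩, x.1.1), by
    have := x.2; have := x.1.2.isLt; rw [Fin.lt_def] at *; constructor <;> dsimp only <;> omega⟩
  left_inv p := by
    apply Subtype.ext; ext <;> dsimp only; have := p.2.1; omega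
  right_inv x := by
    apply Subtype.ext; ext <;> dsimp only; have := x.2; rw [Fin.lt_def] at this; omega

lemma card_lVert : Fintype.card (LVert r) = (r + 1).choose 2 := by
  rw [Fintype.card_congr (lVertEquiv r), Fintype.card_subtype, Fintype.card_product_filter_lt,
    Fintype.card_fin]

lemma two_mul_card_hsVert : 2 * Fintype.card (HSVert r k) = (k * r + 2) * (r + 1) := by
  rw [show Fintype.card (HSVert r k) = Fintype.card (Unit ⊕ Fin r ⊕ (Fin k × LVert r)) from
    Fintype.card_congr (Equiv.refl _)]
  have hchoose : (r + 1).choose 2 * 2 = (r + 1) * r := by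
    simpa using (Nat.add_one_mul_choose_eq r 1).symm
  simp only [Fintype.card_sum, Fintype.card_unit, Fintype.card_fin, Fintype.card_prod, card_lVert]
  nlinarith [hchoose]

end HS

/-- For `k ≥ 2` and even `d` (`d ≥ 2`), the hairy spider `HS_{d,k}` is a tree of diameter
`d`, metric dimension `k`, and order `(1/8)(kd+4)(d+2)`. -/
theorem statement19 (d k : ℕ) (hk : 2 ≤ k) (hd : Even d) (hd2 : 2 ≤ d) :
    (HS (d / 2) k).IsTree ∧ (HS (d / 2) k).diam = d ∧
      (HS (d / 2) k).HasMetricDim k ∧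
      8 * Fintype.card (HSVert (d / 2) k) = (k * d + 4) * (d + 2) := by
  obtain ⟨r, rfl⟩ := hd
  rw [show (r + r) / 2 = r by omega]
  have hr : 1 ≤ r := by omega
  refine ⟨HS.isTree, by rw [HS.diam_eq hk hr]; ring, HS.hasMetricDim hk hr, ?_⟩
  calc 8 * Fintype.card (HSVert r k) = 4 * (2 * Fintype.card (HSVert r k)) := by ring
    _ = (k * (r + r) + 4) * (r + r + 2) := by rw [HS.two_mul_card_hsVert]; ring
end
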